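/- arXiv:2003.05912 — 6 statements merged into one kernel-verified Lean document; each statement's English description precedes it below -/
import Mathlib

section
/- (Corollary 2) Suppose ẋ = F(x, w) is monotone: for all i ≠ j, F_i(x, w) is nondecreasing in x_j, and for all i, k, F_i(x, w) is nondecreasing in w_k. Suppose x_eq is a globally asymptotically stable equilibrium of ẋ = F(x, w̲), x̂_eq is a globally asymptotically stable equilibrium of ẋ = F(x, w̄), and x_eq ⪯ x̂_eq. Then 𝒳_eq := [x_eq, x̂_eq] is robustly forward invariant and globally attractive for ẋ = F(x, w); moreover, no hyperrectangle that is a proper subset of 𝒳_eq is robustly forward invariant for ẋ = F(x, w). -/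
open Set Function Filter Topology

/-- A function is piecewise continuous on a set `s` if it is continuous on `s` off of
finitely many points. -/
def PiecewiseContinuousOn {α : Type*} [TopologicalSpace α] (w : ℝ → α) (s : Set ℝ) : Prop :=
  ∃ E : Finset ℝ, ContinuousOn w (s \ (E : Set ℝ))

/-- `d` is a decomposition function for the vector field `F` on state space `ℝⁿ` with
disturbance set `𝒲 = Set.Icc wl wu ⊆ ℝᵐ`:  `d` is locally Lipschitz, agrees with `F` on the
diagonal, `dᵢ` is nondecreasing in `xⱼ` for `j ≠ i`, nonincreasing in every component of `x̂`,
nondecreasing in every component of `w` and nonincreasing in every component of `ŵ`. -/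
def IsDecompositionFunction {n m : ℕ} (wl wu : Fin m → ℝ)
    (F : (Fin n → ℝ) → (Fin m → ℝ) → (Fin n → ℝ))
    (d : (Fin n → ℝ) → (Fin m → ℝ) → (Fin n → ℝ) → (Fin m → ℝ) → (Fin n → ℝ)) : Prop :=
  LocallyLipschitz
      (fun p : ((Fin n → ℝ) × (Fin m → ℝ)) × ((Fin n → ℝ) × (Fin m → ℝ)) =>
        d p.1.1 p.1.2 p.2.1 p.2.2)
    ∧ (∀ x : Fin n → ℝ, ∀ w ∈ Set.Icc wl wu, d x w x w = F x w)
    ∧ (∀ (i j : Fin n), j ≠ i → ∀ (x xh : Fin n → ℝ) (s t : ℝ), s ≤ t →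
        ∀ w ∈ Set.Icc wl wu, ∀ wh ∈ Set.Icc wl wu,
          d (Function.update x j s) w xh wh i ≤ d (Function.update x j t) w xh wh i)
    ∧ (∀ (i j : Fin n) (x xh : Fin n → ℝ) (s t : ℝ), s ≤ t →
        ∀ w ∈ Set.Icc wl wu, ∀ wh ∈ Set.Icc wl wu,
          d x w (Function.update xh j t) wh i ≤ d x w (Function.update xh j s) wh i)
    ∧ (∀ (i : Fin n) (k : Fin m) (x xh : Fin n → ℝ) (s t : ℝ),
        wl k ≤ s → s ≤ t → t ≤ wu k →
        ∀ w ∈ Set.Icc wl wu, ∀ wh ∈ Set.Icc wl wu,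
          d x (Function.update w k s) xh wh i ≤ d x (Function.update w k t) xh wh i)
    ∧ (∀ (i : Fin n) (k : Fin m) (x xh : Fin n → ℝ) (s t : ℝ),
        wl k ≤ s → s ≤ t → t ≤ wu k →
        ∀ w ∈ Set.Icc wl wu, ∀ wh ∈ Set.Icc wl wu,
          d x w xh (Function.update wh k t) i ≤ d x w xh (Function.update wh k s) i)

/-- A set `A ⊆ ℝⁿ` is robustly forward invariant for `ẋ = F(x, w)` with disturbances
valued in `𝒲 = Set.Icc wl wu`. -/
def RobustlyForwardInvariant {n m : ℕ} (wl wu : Fin m → ℝ)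
    (F : (Fin n → ℝ) → (Fin m → ℝ) → (Fin n → ℝ)) (A : Set (Fin n → ℝ)) : Prop :=
  ∀ T : ℝ, 0 ≤ T →
    ∀ (x : ℝ → (Fin n → ℝ)) (w : ℝ → (Fin m → ℝ)),
      (∀ t ∈ Set.Icc (0:ℝ) T, w t ∈ Set.Icc wl wu) →
      PiecewiseContinuousOn w (Set.Icc 0 T) →
      (∀ t ∈ Set.Icc (0:ℝ) T, HasDerivAt x (F (x t) (w t)) t) →
      x 0 ∈ A → ∀ t ∈ Set.Icc (0:ℝ) T, x t ∈ A

/-!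
Comparison principle for cooperative systems: if at the coordinate where the gap `z - x` is
largest it grows at most linearly in itself, Gronwall's inequality applied to the positive part of
that largest gap keeps two trajectories ordered. Since `F` is monotone in `w`, every trajectory
under an admissible disturbance is squeezed between the trajectories of `ẋ = F(x, w̲)` and
`ẋ = F(x, w̄)` from the same initial point. The constant trajectories at `x_eq` and `x̂_eq` give
invariance, and convergence of the two extreme trajectories gives attractivity. Conversely, an
invariant box `[p, q]` contains the limit `x_eq` of the `w̲`-trajectory from `p` and the limit
`x̂_eq` of the `w̄`-trajectory from `q`, hence contains `[x_eq, x̂_eq]`.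
-/

open scoped NNReal

theorem le_of_forall_update_le {ι α β : Type*} [Fintype ι] [DecidableEq ι] [Preorder β]
    (g : (ι → α) → β) {a b : ι → α} (h : ∀ j x, g (update x j (a j)) ≤ g (update x j (b j))) :
    g a ≤ g b := by
  have key : ∀ s : Finset ι, g a ≤ g (s.piecewise b a) := by
    intro s
    induction s using Finset.induction_on with
    | empty => simp
    | insert j s hj ih =>
      have hfix : update (s.piecewise b a) j (a j) = s.piecewise b a :=
        update_eq_self_iff.2 (s.piecewise_eq_of_notMem b a hj).symm
      have hstep := h j (s.piecewise b a)
      rw [hfix] at hstep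
      rw [Finset.piecewise_insert]
      exact ih.trans hstep
  simpa using key Finset.univ

theorem le_of_le_of_eq_of_update_mono {ι α β : Type*} [Fintype ι] [DecidableEq ι] [Preorder α]
    [Preorder β] {g : (ι → α) → β} {i : ι}
    (h : ∀ j, j ≠ i → ∀ x s t, s ≤ t → g (update x j s) ≤ g (update x j t))
    {a b : ι → α} (hab : a ≤ b) (hi : a i = b i) : g a ≤ g b := by
  refine le_of_forall_update_le g fun j x => ?_
  rcases eq_or_ne j i with rfl | hj
  · rw [hi]
  · exact h j hj x _ _ (hab j)

theorem monotoneOn_Icc_of_update_mono {ι α β : Type*} [Fintype ι] [DecidableEq ι] [Preorder α]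
    [Preorder β] {g : (ι → α) → β} {l u : ι → α}
    (h : ∀ k x s t, l k ≤ s → s ≤ t → t ≤ u k → g (update x k s) ≤ g (update x k t)) :
    MonotoneOn g (Icc l u) := fun _ ha _ hb hab =>
  le_of_forall_update_le g fun k x => h k x _ _ (ha.1 k) (hab k) (hb.2 k)

theorem eventually_slope_sup'_lt {ι : Type*} [Fintype ι] [Nonempty ι] {g : ι → ℝ → ℝ}
    {g' : ι → ℝ} {t r : ℝ} (hg : ∀ i, HasDerivAt (g i) (g' i) t)
    (hr : ∀ i, g i t = Finset.univ.sup' Finset.univ_nonempty (g · t) → g' i < r) :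
    ∀ᶠ s in 𝓝[>] t, slope (fun s => Finset.univ.sup' Finset.univ_nonempty (g · s)) t s < r := by
  set f := fun s => Finset.univ.sup' Finset.univ_nonempty (g · s)
  have hright : ∀ᶠ s in 𝓝[>] t, t < s := self_mem_nhdsWithin
  have key : ∀ i, ∀ᶠ s in 𝓝[>] t, g i s - f t < r * (s - t) := by
    intro i
    rcases (Finset.le_sup' (g · t) (Finset.mem_univ i)).eq_or_lt with hact | hinact
    · have hslope : ∀ᶠ s in 𝓝[>] t, slope (g i) t s < r :=
        ((hasDerivAt_iff_tendsto_slope.1 (hg i)).mono_left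
          (nhdsWithin_mono _ fun _ hs => ne_of_gt hs)).eventually_lt_const (hr i hact)
      filter_upwards [hslope, hright] with s hs hts
      rw [slope_def_field, div_lt_iff₀ (sub_pos.2 hts)] at hs
      have hft : f t = g i t := hact.symm
      linarith
    · have hcont : Tendsto (fun s => g i s - f t - r * (s - t)) (𝓝 t)
          (𝓝 (g i t - f t - r * (t - t))) :=
        (((hg i).continuousAt.tendsto.sub_const _).sub
          ((tendsto_id.sub_const t).const_mul r))
      have hneg : g i t - f t - r * (t - t) < 0 := by simpa using hinact
      filter_upwards [nhdsWithin_le_nhds (hcont.eventually_lt_const hneg)] with s hs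
      linarith
  filter_upwards [eventually_all.2 key, hright] with s hs hts
  rw [slope_def_field, div_lt_iff₀ (sub_pos.2 hts), sub_lt_iff_lt_add',
    Finset.sup'_lt_iff]
  intro i _
  linarith [hs i]

theorem le_of_hasDerivAt_of_gap_le {ι : Type*} [Fintype ι] {x z fx fz : ℝ → ι → ℝ} {T K : ℝ}
    (hx : ∀ t ∈ Icc 0 T, HasDerivAt x (fx t) t) (hz : ∀ t ∈ Icc 0 T, HasDerivAt z (fz t) t)
    (hgap : ∀ t ∈ Icc 0 T, ∀ i, 0 ≤ z t i - x t i → (∀ j, z t j - x t j ≤ z t i - x t i) →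
      fz t i - fx t i ≤ K * (z t i - x t i))
    (h0 : z 0 ≤ x 0) : ∀ t ∈ Icc 0 T, z t ≤ x t := by
  -- Gronwall for the positive part of the largest gap; the index `none` contributes the `0`.
  let g : Option ι → ℝ → ℝ := fun o s => o.elim 0 fun i => z s i - x s i
  let f : ℝ → ℝ := fun s => Finset.univ.sup' Finset.univ_nonempty (g · s)
  have hg : ∀ t ∈ Icc 0 T, ∀ o, HasDerivAt (g o) (o.elim 0 fun i => fz t i - fx t i) t
    | t, _, none => hasDerivAt_const t 0
    | t, ht, some i => (hasDerivAt_pi.1 (hz t ht) i).sub (hasDerivAt_pi.1 (hx t ht) i)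
  have hle_f : ∀ s o, g o s ≤ f s := fun s o => Finset.le_sup' (g · s) (Finset.mem_univ o)
  have hf_cont : ContinuousOn f (Icc 0 T) :=
    ContinuousOn.finset_sup'_apply _ fun o _ t ht => (hg t ht o).continuousAt.continuousWithinAt
  have hf_deriv : ∀ t ∈ Ico 0 T, ∀ r, K * f t < r →
      ∃ᶠ s in 𝓝[>] t, (s - t)⁻¹ * (f s - f t) < r := by
    intro t ht r hr
    refine (eventually_slope_sup'_lt (hg t (Ico_subset_Icc_self ht)) ?_).frequently
    rintro (_ | i) hact
    · have hf0 : f t = 0 := hact.symm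
      simpa [hf0] using hr
    · have hfi : f t = z t i - x t i := hact.symm
      have hmax : ∀ j, z t j - x t j ≤ z t i - x t i := fun j => hfi ▸ hle_f t (some j)
      have hnonneg : 0 ≤ z t i - x t i := hfi ▸ hle_f t none
      exact (hgap t (Ico_subset_Icc_self ht) i hnonneg hmax).trans_lt (hfi ▸ hr)
  have hf0 : f 0 ≤ 0 := by
    refine Finset.sup'_le _ _ fun o _ => ?_
    cases o with
    | none => exact le_rfl
    | some i => exact sub_nonpos.2 (h0 i)
  intro t ht i
  have hft := le_gronwallBound_of_liminf_deriv_right_le hf_cont hf_deriv hf0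
    (fun t _ => (add_zero (K * f t)).ge) t ht
  rw [gronwallBound_ε0_δ0] at hft
  exact sub_nonpos.1 ((hle_f t (some i)).trans hft)

theorem apply_sub_apply_le_of_forall_sub_le {ι : Type*} [Fintype ι] {G : (ι → ℝ) → ι → ℝ}
    {K : ℝ≥0} (hG : LipschitzWith K G) (hoff : ∀ i x y, x ≤ y → x i = y i → G x i ≤ G y i)
    {x z : ι → ℝ} {i : ι} (hi : 0 ≤ z i - x i) (hmax : ∀ j, z j - x j ≤ z i - x i) :
    G z i - G x i ≤ K * (z i - x i) := by
  -- Shift `x` up by the largest gap: this dominates `z` and agrees with it at `i`.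
  set c : ι → ℝ := x + fun _ => z i - x i
  have hzc : G z i ≤ G c i :=
    hoff i z c (fun j => by simp only [c, Pi.add_apply]; linarith [hmax j])
      (by simp only [c, Pi.add_apply]; ring)
  have hdist : dist c x ≤ z i - x i := by
    rw [dist_self_add_left]
    exact (pi_norm_const_le _).trans (Real.norm_of_nonneg hi).le
  have hcx : G c i - G x i ≤ K * (z i - x i) :=
    calc G c i - G x i ≤ dist (G c) (G x) := (Real.sub_le_dist _ _).trans (dist_le_pi_dist _ _ i)
      _ ≤ K * dist c x := hG.dist_le_mul c x
      _ ≤ K * (z i - x i) := by gcongr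
  linarith

theorem solution_le_solution {ι W : Type*} [Fintype ι] [Preorder W] {D : Set W}
    {F : (ι → ℝ) → W → ι → ℝ} {K : ℝ≥0} (hF : ∀ w ∈ D, LipschitzWith K (F · w))
    (hoff : ∀ i x y, x ≤ y → x i = y i → ∀ w ∈ D, F x w i ≤ F y w i)
    (hmono : ∀ x, MonotoneOn (F x) D) {T : ℝ} {v w : ℝ → W} {z x : ℝ → ι → ℝ}
    (hv : ∀ t ∈ Icc 0 T, v t ∈ D) (hw : ∀ t ∈ Icc 0 T, w t ∈ D)
    (hvw : ∀ t ∈ Icc 0 T, v t ≤ w t)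
    (hz : ∀ t ∈ Icc 0 T, HasDerivAt z (F (z t) (v t)) t)
    (hx : ∀ t ∈ Icc 0 T, HasDerivAt x (F (x t) (w t)) t) (h0 : z 0 ≤ x 0) :
    ∀ t ∈ Icc 0 T, z t ≤ x t := by
  refine le_of_hasDerivAt_of_gap_le (K := K) hx hz (fun t ht i hi hmax => ?_) h0
  have hdisturb := hmono (x t) (hv t ht) (hw t ht) (hvw t ht) i
  have hgap := apply_sub_apply_le_of_forall_sub_le (hF _ (hv t ht))
    (fun i x y hxy hi => hoff i x y hxy hi _ (hv t ht)) hi hmax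
  linarith

theorem mem_thickening_Icc_of_le_of_le {ι : Type*} [Fintype ι] {a b x y z : ι → ℝ} {ε : ℝ}
    (hε : 0 < ε) (hab : a ≤ b) (hzx : z ≤ x) (hxy : x ≤ y) (hz : dist z a < ε)
    (hy : dist y b < ε) : x ∈ Metric.thickening ε (Icc a b) := by
  rw [Metric.mem_thickening_iff]
  refine ⟨a ⊔ (x ⊓ b), ⟨le_sup_left, sup_le hab inf_le_right⟩, (dist_pi_lt_iff hε).2 fun i => ?_⟩
  have hzi := (dist_pi_lt_iff hε).1 hz i
  have hyi := (dist_pi_lt_iff hε).1 hy i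
  have hzxi := hzx i
  have hxyi := hxy i
  have habi := hab i
  simp only [Pi.sup_apply, Pi.inf_apply, Real.dist_eq, abs_sub_lt_iff] at hzi hyi ⊢
  simp only [max_def, min_def]
  split_ifs <;> constructor <;> linarith

theorem eventually_mem_of_tendsto_of_le_of_le {ι α : Type*} [Fintype ι] {l : Filter α} [l.NeBot]
    {x y z : α → ι → ℝ} {a b : ι → ℝ} (hz : Tendsto z l (𝓝 a)) (hy : Tendsto y l (𝓝 b))
    (hzxy : ∀ᶠ t in l, z t ≤ x t ∧ x t ≤ y t) {U : Set (ι → ℝ)} (hU : IsOpen U)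
    (hsub : Icc a b ⊆ U) : ∀ᶠ t in l, x t ∈ U := by
  have hab : a ≤ b := le_of_tendsto_of_tendsto hz hy (hzxy.mono fun _ h => h.1.trans h.2)
  obtain ⟨ε, hε, hthick⟩ := isCompact_Icc.exists_thickening_subset_open hU hsub
  filter_upwards [hzxy, Metric.tendsto_nhds.1 hz ε hε, Metric.tendsto_nhds.1 hy ε hε]
    with t ht hzt hyt
  exact hthick (mem_thickening_Icc_of_le_of_le hε hab ht.1 ht.2 hzt hyt)

theorem RobustlyForwardInvariant.mem_of_tendsto {n m : ℕ} {wl wu : Fin m → ℝ}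
    {F : (Fin n → ℝ) → (Fin m → ℝ) → Fin n → ℝ} {A : Set (Fin n → ℝ)}
    (hA : RobustlyForwardInvariant wl wu F A) (hAc : IsClosed A) {w₀ : Fin m → ℝ}
    (hw₀ : w₀ ∈ Icc wl wu) {z : ℝ → Fin n → ℝ} (hz : ∀ t ∈ Ici 0, HasDerivAt z (F (z t) w₀) t)
    (hz0 : z 0 ∈ A) {p : Fin n → ℝ} (hzp : Tendsto z atTop (𝓝 p)) : p ∈ A :=
  hAc.mem_of_tendsto hzp <| (eventually_ge_atTop 0).mono fun t ht =>
    hA t ht z (fun _ => w₀) (fun _ _ => hw₀) ⟨∅, continuousOn_const⟩ (fun s hs => hz s hs.1) hz0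
      t ⟨ht, le_rfl⟩

section BoxDisturbance

variable {n m : ℕ} {wl wu : Fin m → ℝ} {F : (Fin n → ℝ) → (Fin m → ℝ) → Fin n → ℝ} {K : ℝ≥0}
  (hF : ∀ w ∈ Icc wl wu, LipschitzWith K (F · w))
  (hoff : ∀ i x y, x ≤ y → x i = y i → ∀ w ∈ Icc wl wu, F x w i ≤ F y w i)
  (hmono : ∀ x, MonotoneOn (F x) (Icc wl wu)) (hwlu : wl ≤ wu)
include hF hoff hmono hwlu

theorem robustlyForwardInvariant_Icc {a b : Fin n → ℝ} (ha : F a wl = 0) (hb : F b wu = 0) :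
    RobustlyForwardInvariant wl wu F (Icc a b) := by
  intro T _ x w hw _ hx hx0 t ht
  have hconst : ∀ (c : Fin n → ℝ) (w₀ : Fin m → ℝ), F c w₀ = 0 →
      ∀ s ∈ Icc (0 : ℝ) T, HasDerivAt (fun _ => c) (F c w₀) s :=
    fun c w₀ hc s _ => hc ▸ hasDerivAt_const s c
  exact ⟨solution_le_solution hF hoff hmono (fun _ _ => ⟨le_rfl, hwlu⟩) hw (fun s hs => (hw s hs).1)
      (hconst a wl ha) hx hx0.1 t ht,
    solution_le_solution hF hoff hmono hw (fun _ _ => ⟨hwlu, le_rfl⟩) (fun s hs => (hw s hs).2)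
      hx (hconst b wu hb) hx0.2 t ht⟩

theorem eventually_mem_of_tendsto_extreme_solutions {x z y : ℝ → Fin n → ℝ}
    {w : ℝ → Fin m → ℝ} (hw : ∀ t ∈ Ici 0, w t ∈ Icc wl wu)
    (hx : ∀ t ∈ Ici 0, HasDerivAt x (F (x t) (w t)) t)
    (hz : ∀ t ∈ Ici 0, HasDerivAt z (F (z t) wl) t) (hz0 : z 0 = x 0)
    (hy : ∀ t ∈ Ici 0, HasDerivAt y (F (y t) wu) t) (hy0 : y 0 = x 0)
    {a b : Fin n → ℝ} (hza : Tendsto z atTop (𝓝 a)) (hyb : Tendsto y atTop (𝓝 b))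
    {U : Set (Fin n → ℝ)} (hU : IsOpen U) (hsub : Icc a b ⊆ U) : ∀ᶠ t in atTop, x t ∈ U := by
  refine eventually_mem_of_tendsto_of_le_of_le hza hyb
    ((eventually_ge_atTop 0).mono fun t ht => ⟨?_, ?_⟩) hU hsub
  · exact solution_le_solution hF hoff hmono (T := t) (fun _ _ => ⟨le_rfl, hwlu⟩)
      (fun s hs => hw s hs.1) (fun s hs => (hw s hs.1).1) (fun s hs => hz s hs.1)
      (fun s hs => hx s hs.1) hz0.le t ⟨ht, le_rfl⟩
  · exact solution_le_solution hF hoff hmono (T := t) (fun s hs => hw s hs.1)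
      (fun _ _ => ⟨hwlu, le_rfl⟩) (fun s hs => (hw s hs.1).2) (fun s hs => hx s hs.1)
      (fun s hs => hy s hs.1) hy0.ge t ⟨ht, le_rfl⟩

end BoxDisturbance

theorem corollary2_monotone_systems_general
    {n m : ℕ} (wl wu : Fin m → ℝ) (hwlu : wl ≤ wu)
    (F : (Fin n → ℝ) → (Fin m → ℝ) → (Fin n → ℝ))
    (hFlip : ∃ K : NNReal, LipschitzWith K (fun p : (Fin n → ℝ) × (Fin m → ℝ) => F p.1 p.2))
    -- the system is monotone: Fᵢ is nondecreasing in xⱼ for j ≠ i ...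
    (hmonox : ∀ (i j : Fin n), j ≠ i → ∀ (x : Fin n → ℝ) (s t : ℝ), s ≤ t →
      ∀ w ∈ Set.Icc wl wu,
        F (Function.update x j s) w i ≤ F (Function.update x j t) w i)
    -- ... and Fᵢ is nondecreasing in every component of w
    (hmonow : ∀ (i : Fin n) (k : Fin m), ∀ (x : Fin n → ℝ) (w : Fin m → ℝ) (s t : ℝ),
      wl k ≤ s → s ≤ t → t ≤ wu k →
        F x (Function.update w k s) i ≤ F x (Function.update w k t) i)
    (xeq xheq : Fin n → ℝ)
    -- xeq and xheq are equilibria of ẋ = F(x, w̲) and ẋ = F(x, w̄) respectively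
    (heql : F xeq wl = 0) (heqh : F xheq wu = 0)
    -- xeq is globally asymptotically stable for ẋ = F(x, w̲):
    (hexl : ∀ x0 : Fin n → ℝ, ∃ z : ℝ → (Fin n → ℝ),
      (∀ t ∈ Set.Ici (0:ℝ), HasDerivAt z (F (z t) wl) t) ∧ z 0 = x0)
    (hconvl : ∀ z : ℝ → (Fin n → ℝ), (∀ t ∈ Set.Ici (0:ℝ), HasDerivAt z (F (z t) wl) t) →
      Filter.Tendsto z Filter.atTop (nhds xeq))
    -- xheq is globally asymptotically stable for ẋ = F(x, w̄):
    (hexh : ∀ x0 : Fin n → ℝ, ∃ z : ℝ → (Fin n → ℝ),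
      (∀ t ∈ Set.Ici (0:ℝ), HasDerivAt z (F (z t) wu) t) ∧ z 0 = x0)
    (hconvh : ∀ z : ℝ → (Fin n → ℝ), (∀ t ∈ Set.Ici (0:ℝ), HasDerivAt z (F (z t) wu) t) →
      Filter.Tendsto z Filter.atTop (nhds xheq)) :
    -- 𝒳_eq is robustly forward invariant
    RobustlyForwardInvariant wl wu F (Set.Icc xeq xheq) ∧
    -- 𝒳_eq is globally attractive
    (∀ (x : ℝ → (Fin n → ℝ)) (w : ℝ → (Fin m → ℝ)),
      (∀ t ∈ Set.Ici (0:ℝ), w t ∈ Set.Icc wl wu) →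
      PiecewiseContinuousOn w (Set.Ici 0) →
      (∀ t ∈ Set.Ici (0:ℝ), HasDerivAt x (F (x t) (w t)) t) →
      ∀ U : Set (Fin n → ℝ), IsOpen U → Set.Icc xeq xheq ⊆ U →
        ∃ T : ℝ, 0 < T ∧ ∀ t : ℝ, T ≤ t → x t ∈ U) ∧
    -- no (nonempty) hyperrectangle that is a proper subset of 𝒳_eq is robustly forward invariant
    (∀ p q : Fin n → ℝ, p ≤ q → Set.Icc p q ⊆ Set.Icc xeq xheq →
      Set.Icc p q ≠ Set.Icc xeq xheq →
      ¬ RobustlyForwardInvariant wl wu F (Set.Icc p q)) := by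
  obtain ⟨K, hF⟩ := hFlip
  have hFx : ∀ w ∈ Icc wl wu, LipschitzWith K (F · w) := fun w _ => by
    simpa [Function.comp_def] using hF.comp (LipschitzWith.prodMk_right w)
  have hoff : ∀ i x y, x ≤ y → x i = y i → ∀ w ∈ Icc wl wu, F x w i ≤ F y w i :=
    fun i _ _ hxy hi w hw =>
      le_of_le_of_eq_of_update_mono (g := (F · w i))
        (fun j hj x s t hst => hmonox i j hj x s t hst w hw) hxy hi
  have hmono : ∀ x, MonotoneOn (F x) (Icc wl wu) := fun x =>
    monotoneOn_Icc_of_update_mono fun k w s t hs hst ht i => hmonow i k x w s t hs hst ht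
  refine ⟨robustlyForwardInvariant_Icc hFx hoff hmono hwlu heql heqh, ?_, ?_⟩
  · intro x w hw _ hx U hU hsub
    obtain ⟨z, hz, hz0⟩ := hexl (x 0)
    obtain ⟨y, hy, hy0⟩ := hexh (x 0)
    obtain ⟨T, hT⟩ := eventually_atTop.1 <| eventually_mem_of_tendsto_extreme_solutions
      hFx hoff hmono hwlu hw hx hz hz0 hy hy0 (hconvl z hz) (hconvh y hy) hU hsub
    exact ⟨max T 1, by positivity, fun t ht => hT t (le_of_max_le_left ht)⟩
  · intro p q hpq hsub hne hinv
    obtain ⟨z, hz, hz0⟩ := hexl p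
    obtain ⟨y, hy, hy0⟩ := hexh q
    have hp : xeq ∈ Icc p q := hinv.mem_of_tendsto isClosed_Icc ⟨le_rfl, hwlu⟩ hz
      (hz0.symm ▸ left_mem_Icc.2 hpq) (hconvl z hz)
    have hq : xheq ∈ Icc p q := hinv.mem_of_tendsto isClosed_Icc ⟨hwlu, le_rfl⟩ hy
      (hy0.symm ▸ right_mem_Icc.2 hpq) (hconvh y hy)
    exact hne (hsub.antisymm (Icc_subset_Icc hp.1 hq.2))

/-- Corollary 2: for a monotone system, if `x_eq` is a globally
asymptotically stable equilibrium of `ẋ = F(x, w̲)` and `x̂_eq` one of `ẋ = F(x, w̄)`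
with `x_eq ⪯ x̂_eq`, then `𝒳_eq = [x_eq, x̂_eq]` is robustly forward invariant and globally
attractive, and no hyperrectangle that is a proper subset of `𝒳_eq` is robustly forward
invariant. -/
theorem corollary2_monotone_systems
    {n m : ℕ} (wl wu : Fin m → ℝ) (hwlu : wl ≤ wu)
    (F : (Fin n → ℝ) → (Fin m → ℝ) → (Fin n → ℝ))
    (hFlip : ∃ K : NNReal, LipschitzWith K (fun p : (Fin n → ℝ) × (Fin m → ℝ) => F p.1 p.2))
    -- the system is monotone: Fᵢ is nondecreasing in xⱼ for j ≠ i ...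
    (hmonox : ∀ (i j : Fin n), j ≠ i → ∀ (x : Fin n → ℝ) (s t : ℝ), s ≤ t →
      ∀ w ∈ Set.Icc wl wu,
        F (Function.update x j s) w i ≤ F (Function.update x j t) w i)
    -- ... and Fᵢ is nondecreasing in every component of w
    (hmonow : ∀ (i : Fin n) (k : Fin m), ∀ (x : Fin n → ℝ) (w : Fin m → ℝ) (s t : ℝ),
      wl k ≤ s → s ≤ t → t ≤ wu k →
        F x (Function.update w k s) i ≤ F x (Function.update w k t) i)
    (xeq xheq : Fin n → ℝ) (hle : xeq ≤ xheq)
    -- xeq and xheq are equilibria of ẋ = F(x, w̲) and ẋ = F(x, w̄) respectively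
    (heql : F xeq wl = 0) (heqh : F xheq wu = 0)
    -- xeq is globally asymptotically stable for ẋ = F(x, w̲):
    (hstabl : ∀ U : Set (Fin n → ℝ), IsOpen U → xeq ∈ U →
      ∃ V : Set (Fin n → ℝ), IsOpen V ∧ xeq ∈ V ∧
        ∀ z : ℝ → (Fin n → ℝ), (∀ t ∈ Set.Ici (0:ℝ), HasDerivAt z (F (z t) wl) t) →
          z 0 ∈ V → ∀ t ∈ Set.Ici (0:ℝ), z t ∈ U)
    (hexl : ∀ x0 : Fin n → ℝ, ∃ z : ℝ → (Fin n → ℝ),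
      (∀ t ∈ Set.Ici (0:ℝ), HasDerivAt z (F (z t) wl) t) ∧ z 0 = x0)
    (hconvl : ∀ z : ℝ → (Fin n → ℝ), (∀ t ∈ Set.Ici (0:ℝ), HasDerivAt z (F (z t) wl) t) →
      Filter.Tendsto z Filter.atTop (nhds xeq))
    -- xheq is globally asymptotically stable for ẋ = F(x, w̄):
    (hstabh : ∀ U : Set (Fin n → ℝ), IsOpen U → xheq ∈ U →
      ∃ V : Set (Fin n → ℝ), IsOpen V ∧ xheq ∈ V ∧
        ∀ z : ℝ → (Fin n → ℝ), (∀ t ∈ Set.Ici (0:ℝ), HasDerivAt z (F (z t) wu) t) →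
          z 0 ∈ V → ∀ t ∈ Set.Ici (0:ℝ), z t ∈ U)
    (hexh : ∀ x0 : Fin n → ℝ, ∃ z : ℝ → (Fin n → ℝ),
      (∀ t ∈ Set.Ici (0:ℝ), HasDerivAt z (F (z t) wu) t) ∧ z 0 = x0)
    (hconvh : ∀ z : ℝ → (Fin n → ℝ), (∀ t ∈ Set.Ici (0:ℝ), HasDerivAt z (F (z t) wu) t) →
      Filter.Tendsto z Filter.atTop (nhds xheq)) :
    -- 𝒳_eq is robustly forward invariant
    RobustlyForwardInvariant wl wu F (Set.Icc xeq xheq) ∧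
    -- 𝒳_eq is globally attractive
    (∀ (x : ℝ → (Fin n → ℝ)) (w : ℝ → (Fin m → ℝ)),
      (∀ t ∈ Set.Ici (0:ℝ), w t ∈ Set.Icc wl wu) →
      PiecewiseContinuousOn w (Set.Ici 0) →
      (∀ t ∈ Set.Ici (0:ℝ), HasDerivAt x (F (x t) (w t)) t) →
      ∀ U : Set (Fin n → ℝ), IsOpen U → Set.Icc xeq xheq ⊆ U →
        ∃ T : ℝ, 0 < T ∧ ∀ t : ℝ, T ≤ t → x t ∈ U) ∧
    -- no (nonempty) hyperrectangle that is a proper subset of 𝒳_eq is robustly forward invariant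
    (∀ p q : Fin n → ℝ, p ≤ q → Set.Icc p q ⊆ Set.Icc xeq xheq →
      Set.Icc p q ≠ Set.Icc xeq xheq →
      ¬ RobustlyForwardInvariant wl wu F (Set.Icc p q)) :=
  corollary2_monotone_systems_general wl wu hwlu F hFlip hmonox hmonow xeq xheq heql heqh hexl
    hconvl hexh hconvh
end

section
/- (Proposition 2) Let G := -F be the backward-time vector field of ẋ = F(x, w), and suppose G is mixed-monotone with respect to a decomposition function D. Let (a, â) : [0, T] → ℝⁿ × ℝⁿ be a solution of the embedding ODE (ȧ, ȧ̂) = E(a, â) := (D(a, w̲, â, w̄), D(â, w̄, a, w̲)). If x₀ ∈ ℝⁿ is such that there exists a piecewise continuous w : [0, T] → 𝒲 and a solution x : [0, T] → ℝⁿ of ẋ = F(x, w(t)) with x(0) = x₀ and a(0) ⪯ x(T) ⪯ â(0), then a(T) ⪯ x₀ ⪯ â(T). Equivalently, the backward reachable set S^F(T; [a(0), â(0)]) of initial conditions that can be driven into [a(0), â(0)] in time T is contained in the hyperrectangle [a(T), â(T)]. -/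
open Set Function Filter Topology

/-!
Reversing time, `y t := x (T - t)` solves `ẏ = G(y, v)` with `G = -F` and the admissible
disturbance `v t := w (T - t)`, and `y 0 = x T ∈ [a 0, â 0]`. So it suffices to show that the
embedding system brackets every trajectory of `G`: `a t ≤ y t ≤ â t`.

For that, let `M t` be the largest of `0` and the coordinate gaps `aᵢ - yᵢ`, `yᵢ - âᵢ`. At a
coordinate `i` realising the gap `M = aᵢ - yᵢ`, mixed monotonicity lets us replace `(a, w̲, â, w̄)`
by `(a ⊔ y, v, â ⊓ y, v)` without decreasing `Dᵢ`; both points are within `M` of `y`, and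
`D(y, v, y, v) = G(y, v)`, so the Lipschitz bound of `D` on a compact set gives
`ȧᵢ - ẏᵢ ≤ C M`. Symmetrically for the upper gaps. Gronwall then turns `M 0 = 0` into `M ≡ 0`.
-/

open scoped NNReal

section CoordinatewiseMonotone

variable {ι α β : Type*} [Fintype ι] [DecidableEq ι] [Preorder α] [Preorder β]

theorem apply_le_apply_of_update_le {f : (ι → α) → β} {S : Set (ι → α)} [S.OrdConnected]
    {K : Set ι}
    (hf : ∀ j ∈ K, ∀ x ∈ S, ∀ s t, s ≤ t → update x j s ∈ S → update x j t ∈ S →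
      f (update x j s) ≤ f (update x j t))
    {p q : ι → α} (hp : p ∈ S) (hq : q ∈ S) (hpq : p ≤ q) (hK : ∀ j ∉ K, p j = q j) :
    f p ≤ f q := by
  have hmem : ∀ J : Finset ι, J.piecewise q p ∈ S := fun J =>
    Set.OrdConnected.out ‹_› hp hq (J.piecewise_mem_Icc' hpq)
  suffices h : ∀ J : Finset ι, f p ≤ f (J.piecewise q p) by
    simpa using h Finset.univ
  intro J
  induction J using Finset.induction_on with
  | empty => simp
  | insert k J hk ih =>
    set x := J.piecewise q p
    have hpk : update x k (p k) = x := by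
      rw [← Finset.piecewise_eq_of_notMem J q p hk, update_eq_self]
    have hqk : update x k (q k) = (insert k J).piecewise q p :=
      (Finset.piecewise_insert J q p k).symm
    calc f p ≤ f x := ih
      _ = f (update x k (p k)) := by rw [hpk]
      _ ≤ f (update x k (q k)) := by
        by_cases hkK : k ∈ K
        · exact hf k hkK x (hmem J) _ _ (hpq k) (hpk.symm ▸ hmem J) (hqk.symm ▸ hmem _)
        · rw [hK k hkK]
      _ = f ((insert k J).piecewise q p) := by rw [hqk]

end CoordinatewiseMonotone

theorem eventually_lt_add_mul_of_hasDerivWithinAt {f : ℝ → ℝ} {f' m r t : ℝ}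
    (hf : HasDerivWithinAt f f' (Ici t) t) (hfm : f t ≤ m) (hr : f t = m → f' < r) :
    ∀ᶠ z in 𝓝[>] t, f z < m + r * (z - t) := by
  rcases hfm.eq_or_lt with h | h
  · filter_upwards [hf.Ioi_of_Ici.limsup_slope_le' (lt_irrefl t) (hr h), self_mem_nhdsWithin]
      with z hslope hz
    rw [slope_def_field, div_lt_iff₀ (sub_pos.2 hz)] at hslope
    linarith
  · have hline : Tendsto (fun z => m + r * (z - t)) (𝓝[>] t) (𝓝 m) :=
      (Continuous.tendsto' (by fun_prop) t m (by simp)).mono_left nhdsWithin_le_nhds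
    exact (hf.continuousWithinAt.mono Ioi_subset_Ici_self).eventually_lt hline h

theorem nonpos_of_deriv_le_mul_at_max {ι : Type*} [Fintype ι] {g g' : ι → ℝ → ℝ} {C a b : ℝ}
    (hg : ∀ i, ContinuousOn (g i) (Icc a b))
    (hg' : ∀ i, ∀ t ∈ Ico a b, HasDerivWithinAt (g i) (g' i t) (Ici t) t)
    (hmax : ∀ t ∈ Ico a b, ∀ i, 0 ≤ g i t → (∀ j, g j t ≤ g i t) → g' i t ≤ C * g i t)
    (ha : ∀ i, g i a ≤ 0) :
    ∀ t ∈ Icc a b, ∀ i, g i t ≤ 0 := by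
  classical
  -- the extra index `none` keeps the maximum `M` nonnegative
  set g₀ : Option ι → ℝ → ℝ := fun o t => o.elim 0 (g · t)
  set M : ℝ → ℝ := fun t => Finset.univ.sup' Finset.univ_nonempty (g₀ · t)
  have hle : ∀ o t, g₀ o t ≤ M t := fun o t => Finset.le_sup' (g₀ · t) (Finset.mem_univ o)
  have hMc : ContinuousOn M (Icc a b) :=
    ContinuousOn.finset_sup'_apply _ fun o _ => by cases o; exacts [continuousOn_const, hg _]
  have hM' : ∀ t ∈ Ico a b, ∀ r, C * M t < r →
      ∃ᶠ z in 𝓝[>] t, (z - t)⁻¹ * (M z - M t) < r := by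
    intro t ht r hr
    have hev : ∀ᶠ z in 𝓝[>] t, ∀ o, g₀ o z < M t + r * (z - t) := by
      refine eventually_all.2 fun o => ?_
      cases o with
      | none =>
        refine eventually_lt_add_mul_of_hasDerivWithinAt (hasDerivWithinAt_const _ _ 0)
          (hle none t) fun h => ?_
        simpa [← show (0 : ℝ) = M t from h] using hr
      | some i =>
        refine eventually_lt_add_mul_of_hasDerivWithinAt (hg' i t ht) (hle (some i) t) fun h => ?_
        have hi : g i t = M t := h
        refine (hmax t ht i ?_ fun j => ?_).trans_lt (hi ▸ hr)
        · exact hi ▸ hle none t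
        · exact hi ▸ hle (some j) t
    refine (hev.and self_mem_nhdsWithin).frequently.mono ?_
    rintro z ⟨hz, hzt⟩
    have hMz : M z < M t + r * (z - t) := (Finset.sup'_lt_iff _).2 fun o _ => hz o
    rw [inv_mul_eq_div, div_lt_iff₀ (sub_pos.2 hzt)]
    linarith
  have hMa : M a ≤ 0 := Finset.sup'_le _ _ fun o _ => by cases o; exacts [le_rfl, ha _]
  intro t ht i
  have hMt := le_gronwallBound_of_liminf_deriv_right_le hMc hM' hMa
    (fun t _ => (add_zero (C * M t)).ge) t ht
  rw [gronwallBound_ε0_δ0] at hMt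
  exact (hle (some i) t).trans hMt

theorem dist_sup_le_of_sub_le {ι : Type*} [Fintype ι] {a y : ι → ℝ} {μ : ℝ} (hμ : 0 ≤ μ)
    (h : ∀ j, a j - y j ≤ μ) : dist (a ⊔ y) y ≤ μ :=
  (dist_pi_le_iff hμ).2 fun j => by
    rw [Real.dist_eq, Pi.sup_apply, abs_of_nonneg (sub_nonneg.2 le_sup_right), sub_le_iff_le_add]
    exact sup_le (by linarith [h j]) (by linarith)

theorem dist_inf_le_of_sub_le {ι : Type*} [Fintype ι] {a y : ι → ℝ} {μ : ℝ} (hμ : 0 ≤ μ)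
    (h : ∀ j, y j - a j ≤ μ) : dist (a ⊓ y) y ≤ μ :=
  (dist_pi_le_iff hμ).2 fun j => by
    rw [Real.dist_eq, abs_sub_comm, Pi.inf_apply, abs_of_nonneg (sub_nonneg.2 inf_le_right),
      sub_le_comm]
    exact le_inf (by linarith [h j]) (by linarith)

namespace IsDecompositionFunction

variable {n m : ℕ} {wl wu : Fin m → ℝ} {G : (Fin n → ℝ) → (Fin m → ℝ) → (Fin n → ℝ)}
  {d : (Fin n → ℝ) → (Fin m → ℝ) → (Fin n → ℝ) → (Fin m → ℝ) → (Fin n → ℝ)}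
  {C : ℝ≥0} {K : Set (Fin n → ℝ)}

theorem apply_le_apply (hd : IsDecompositionFunction wl wu G d) (i : Fin n)
    {x x' xh xh' : Fin n → ℝ} {w w' wh wh' : Fin m → ℝ}
    (hx : x ≤ x') (hxi : x i = x' i) (hxh : xh' ≤ xh) (hw : w ≤ w') (hwh : wh' ≤ wh)
    (hwm : w ∈ Icc wl wu) (hwm' : w' ∈ Icc wl wu) (hwhm : wh ∈ Icc wl wu)
    (hwhm' : wh' ∈ Icc wl wu) :
    d x w xh wh i ≤ d x' w' xh' wh' i := by
  obtain ⟨-, -, hmx, hax, hmw, haw⟩ := hd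
  calc d x w xh wh i
      ≤ d x' w xh wh i :=
        apply_le_apply_of_update_le (f := (d · w xh wh i)) (S := univ) (K := {i}ᶜ)
          (fun j hj _ _ s t hst _ _ => hmx i j hj _ xh s t hst w hwm wh hwhm) trivial trivial hx
          fun j hj => by rwa [not_not.1 hj]
    _ ≤ d x' w' xh wh i :=
        apply_le_apply_of_update_le (f := (d x' · xh wh i)) (K := univ)
          (fun k _ v hv s t hst hs ht => hmw i k x' xh s t (by simpa using hs.1 k) hst
            (by simpa using ht.2 k) v hv wh hwhm) hwm hwm' hw (by simp)
    _ ≤ d x' w' xh' wh i :=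
        apply_le_apply_of_update_le (f := fun z => OrderDual.toDual (d x' w' z wh i))
          (S := univ) (K := univ) (fun j _ _ _ s t hst _ _ => hax i j x' _ s t hst w' hwm' wh hwhm)
          trivial trivial hxh (by simp)
    _ ≤ d x' w' xh' wh' i :=
        apply_le_apply_of_update_le (f := fun z => OrderDual.toDual (d x' w' xh' z i)) (K := univ)
          (fun k _ v hv s t hst hs ht => haw i k x' xh' s t (by simpa using hs.1 k) hst
            (by simpa using ht.2 k) w' hwm' v hv) hwhm' hwhm hwh (by simp)


theorem abs_apply_sub_le_of_dist_le (hd : IsDecompositionFunction wl wu G d)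
    (hC : LipschitzOnWith C
      (fun p : ((Fin n → ℝ) × (Fin m → ℝ)) × ((Fin n → ℝ) × (Fin m → ℝ)) =>
        d p.1.1 p.1.2 p.2.1 p.2.2) ((K ×ˢ Icc wl wu) ×ˢ (K ×ˢ Icc wl wu)))
    {p q y : Fin n → ℝ} (hp : p ∈ K) (hq : q ∈ K) (hy : y ∈ K) {v : Fin m → ℝ}
    (hv : v ∈ Icc wl wu) {μ : ℝ} (hpy : dist p y ≤ μ) (hqy : dist q y ≤ μ) (i : Fin n) :
    |d p v q v i - G y v i| ≤ C * μ := by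
  rw [← hd.2.1 y v hv, ← Real.dist_eq]
  calc dist (d p v q v i) (d y v y v i)
      ≤ dist (d p v q v) (d y v y v) := dist_le_pi_dist _ _ i
    _ ≤ C * dist ((p, v), (q, v)) ((y, v), (y, v)) :=
        hC.dist_le_mul ((p, v), (q, v)) ⟨⟨hp, hv⟩, hq, hv⟩ ((y, v), (y, v)) ⟨⟨hy, hv⟩, hy, hv⟩
    _ ≤ C * μ := by
        gcongr
        simpa [Prod.dist_eq] using ⟨hpy, hqy⟩

theorem lower_sub_le (hd : IsDecompositionFunction wl wu G d)
    (hC : LipschitzOnWith C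
      (fun p : ((Fin n → ℝ) × (Fin m → ℝ)) × ((Fin n → ℝ) × (Fin m → ℝ)) =>
        d p.1.1 p.1.2 p.2.1 p.2.2) ((K ×ˢ Icc wl wu) ×ˢ (K ×ˢ Icc wl wu)))
    {a ah y : Fin n → ℝ} (hy : y ∈ K) (hp : a ⊔ y ∈ K) (hq : ah ⊓ y ∈ K)
    {v : Fin m → ℝ} (hv : v ∈ Icc wl wu) {μ : ℝ} (hμ : 0 ≤ μ)
    (ha : ∀ j, a j - y j ≤ μ) (hah : ∀ j, y j - ah j ≤ μ) {i : Fin n}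
    (hi : a i - y i = μ) : d a wl ah wu i - G y v i ≤ C * μ := by
  have hwl : wl ∈ Icc wl wu := ⟨le_rfl, hv.1.trans hv.2⟩
  have hwu : wu ∈ Icc wl wu := ⟨hv.1.trans hv.2, le_rfl⟩
  have hmono : d a wl ah wu i ≤ d (a ⊔ y) v (ah ⊓ y) v i :=
    hd.apply_le_apply i le_sup_left (sup_eq_left.2 (by linarith)).symm inf_le_left
      hv.1 hv.2 hwl hv hwu hv
  have hlip := hd.abs_apply_sub_le_of_dist_le hC hp hq hy hv (dist_sup_le_of_sub_le hμ ha)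
    (dist_inf_le_of_sub_le hμ hah) i
  linarith [(abs_le.1 hlip).2]

theorem sub_upper_le (hd : IsDecompositionFunction wl wu G d)
    (hC : LipschitzOnWith C
      (fun p : ((Fin n → ℝ) × (Fin m → ℝ)) × ((Fin n → ℝ) × (Fin m → ℝ)) =>
        d p.1.1 p.1.2 p.2.1 p.2.2) ((K ×ˢ Icc wl wu) ×ˢ (K ×ˢ Icc wl wu)))
    {a ah y : Fin n → ℝ} (hy : y ∈ K) (hp : a ⊔ y ∈ K) (hq : ah ⊓ y ∈ K)
    {v : Fin m → ℝ} (hv : v ∈ Icc wl wu) {μ : ℝ} (hμ : 0 ≤ μ)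
    (ha : ∀ j, a j - y j ≤ μ) (hah : ∀ j, y j - ah j ≤ μ) {i : Fin n}
    (hi : y i - ah i = μ) : G y v i - d ah wu a wl i ≤ C * μ := by
  have hwl : wl ∈ Icc wl wu := ⟨le_rfl, hv.1.trans hv.2⟩
  have hwu : wu ∈ Icc wl wu := ⟨hv.1.trans hv.2, le_rfl⟩
  have hmono : d (ah ⊓ y) v (a ⊔ y) v i ≤ d ah wu a wl i :=
    hd.apply_le_apply i inf_le_left (inf_eq_left.2 (by linarith)) le_sup_left
      hv.2 hv.1 hv hwu hv hwl
  have hlip := hd.abs_apply_sub_le_of_dist_le hC hq hp hy hv (dist_inf_le_of_sub_le hμ hah)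
    (dist_sup_le_of_sub_le hμ ha) i
  linarith [(abs_le.1 hlip).1]

theorem mem_Icc_of_embedding (hd : IsDecompositionFunction wl wu G d) {T : ℝ}
    {a ah y : ℝ → Fin n → ℝ} {v : ℝ → Fin m → ℝ}
    (ha : ∀ t ∈ Icc 0 T, HasDerivAt a (d (a t) wl (ah t) wu) t)
    (hah : ∀ t ∈ Icc 0 T, HasDerivAt ah (d (ah t) wu (a t) wl) t)
    (hy : ∀ t ∈ Icc 0 T, HasDerivAt y (G (y t) (v t)) t)
    (hv : ∀ t ∈ Icc 0 T, v t ∈ Icc wl wu) (h0 : y 0 ∈ Icc (a 0) (ah 0)) :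
    ∀ t ∈ Icc 0 T, y t ∈ Icc (a t) (ah t) := by
  have hcont {f : ℝ → Fin n → ℝ} {f' : ℝ → Fin n → ℝ}
      (hf : ∀ t ∈ Icc 0 T, HasDerivAt f (f' t) t) : ContinuousOn f (Icc 0 T) :=
    fun t ht => (hf t ht).continuousAt.continuousWithinAt
  set K := (fun t => a t ⊔ y t) '' Icc 0 T ∪ (fun t => ah t ⊓ y t) '' Icc 0 T ∪ y '' Icc 0 T
  have hsup : ContinuousOn (fun t => a t ⊔ y t) (Icc 0 T) := continuousOn_pi.2 fun j =>
    (continuousOn_pi.1 (hcont ha) j).sup (continuousOn_pi.1 (hcont hy) j)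
  have hinf : ContinuousOn (fun t => ah t ⊓ y t) (Icc 0 T) := continuousOn_pi.2 fun j =>
    (continuousOn_pi.1 (hcont hah) j).inf (continuousOn_pi.1 (hcont hy) j)
  have hK : IsCompact K := ((isCompact_Icc.image_of_continuousOn hsup).union
    (isCompact_Icc.image_of_continuousOn hinf)).union
    (isCompact_Icc.image_of_continuousOn (hcont hy))
  obtain ⟨C, hC⟩ := hd.1.locallyLipschitzOn.exists_lipschitzOnWith_of_compact
    ((hK.prod isCompact_Icc).prod (hK.prod isCompact_Icc))
  set g : Fin n ⊕ Fin n → ℝ → ℝ :=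
    Sum.elim (fun i t => a t i - y t i) (fun i t => y t i - ah t i)
  set g' : Fin n ⊕ Fin n → ℝ → ℝ :=
    Sum.elim (fun i t => d (a t) wl (ah t) wu i - G (y t) (v t) i)
      (fun i t => G (y t) (v t) i - d (ah t) wu (a t) wl i)
  have hg : ∀ k, ∀ t ∈ Icc 0 T, HasDerivAt (g k) (g' k t) t := by
    rintro (i | i) t ht
    · exact (hasDerivAt_pi.1 (ha t ht) i).sub (hasDerivAt_pi.1 (hy t ht) i)
    · exact (hasDerivAt_pi.1 (hy t ht) i).sub (hasDerivAt_pi.1 (hah t ht) i)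
  have hgap := nonpos_of_deriv_le_mul_at_max (C := C)
    (fun k t ht => (hg k t ht).continuousAt.continuousWithinAt)
    (fun k t ht => (hg k t (Ico_subset_Icc_self ht)).hasDerivWithinAt) ?_ ?_
  · exact fun t ht => ⟨fun i => sub_nonpos.1 (hgap t ht (.inl i)),
      fun i => sub_nonpos.1 (hgap t ht (.inr i))⟩
  · intro t ht k hμ hmax
    have htI := Ico_subset_Icc_self ht
    have hlo : ∀ j, a t j - y t j ≤ g k t := fun j => hmax (.inl j)
    have hup : ∀ j, y t j - ah t j ≤ g k t := fun j => hmax (.inr j)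
    have hyK : y t ∈ K := Or.inr ⟨t, htI, rfl⟩
    have hpK : a t ⊔ y t ∈ K := Or.inl (Or.inl ⟨t, htI, rfl⟩)
    have hqK : ah t ⊓ y t ∈ K := Or.inl (Or.inr ⟨t, htI, rfl⟩)
    cases k with
    | inl i => exact hd.lower_sub_le hC hyK hpK hqK (hv t htI) hμ hlo hup rfl
    | inr i => exact hd.sub_upper_le hC hyK hpK hqK (hv t htI) hμ hlo hup rfl
  · rintro (i | i)
    exacts [sub_nonpos.2 (h0.1 i), sub_nonpos.2 (h0.2 i)]

end IsDecompositionFunction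

theorem prop2_backward_reachable_overapproximation_general
    {n m : ℕ} (wl wu : Fin m → ℝ)
    (F : (Fin n → ℝ) → (Fin m → ℝ) → (Fin n → ℝ))
    (D : (Fin n → ℝ) → (Fin m → ℝ) → (Fin n → ℝ) → (Fin m → ℝ) → (Fin n → ℝ))
    -- D is a decomposition function for the backward-time vector field G = -F
    (hD : IsDecompositionFunction wl wu (fun x w => -(F x w)) D)
    (T : ℝ) (hT : 0 ≤ T)
    -- (a, ah) is a solution of the embedding ODE (ȧ, ȧ̂) = E(a, â) on [0, T]
    (a ah : ℝ → (Fin n → ℝ))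
    (ha : ∀ t ∈ Set.Icc (0:ℝ) T, HasDerivAt a (D (a t) wl (ah t) wu) t)
    (hah : ∀ t ∈ Set.Icc (0:ℝ) T, HasDerivAt ah (D (ah t) wu (a t) wl) t)
    (x0 : Fin n → ℝ)
    (w : ℝ → (Fin m → ℝ))
    (hwmem : ∀ t ∈ Set.Icc (0:ℝ) T, w t ∈ Set.Icc wl wu)
    (x : ℝ → (Fin n → ℝ))
    (hx : ∀ t ∈ Set.Icc (0:ℝ) T, HasDerivAt x (F (x t) (w t)) t)
    (hx0 : x 0 = x0)
    (hxT : a 0 ≤ x T ∧ x T ≤ ah 0) :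
    a T ≤ x0 ∧ x0 ≤ ah T := by
  have hrev : ∀ t ∈ Icc (0 : ℝ) T, T - t ∈ Icc 0 T := fun t ht =>
    ⟨sub_nonneg.2 ht.2, sub_le_self T ht.1⟩
  have hbound := hD.mem_Icc_of_embedding ha hah (y := fun t => x (T - t))
    (fun t ht => (hx (T - t) (hrev t ht)).comp_const_sub T t) (fun t ht => hwmem _ (hrev t ht))
    (by simpa using hxT) T ⟨hT, le_rfl⟩
  simpa [hx0] using hbound

/-- Proposition 2: if the backward-time vector field `G = -F` is
mixed-monotone with respect to `D`, then the backward reachable set is over-approximated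
by the embedding system built from `D`: if a solution `x` of `ẋ = F(x, w(t))` starting at
`x₀` satisfies `a(0) ⪯ x(T) ⪯ â(0)`, then `a(T) ⪯ x₀ ⪯ â(T)`; i.e.
`S^F(T; [a(0), â(0)]) ⊆ [a(T), â(T)]`. -/
theorem prop2_backward_reachable_overapproximation
    {n m : ℕ} (wl wu : Fin m → ℝ) (hwlu : wl ≤ wu)
    (F : (Fin n → ℝ) → (Fin m → ℝ) → (Fin n → ℝ))
    (D : (Fin n → ℝ) → (Fin m → ℝ) → (Fin n → ℝ) → (Fin m → ℝ) → (Fin n → ℝ))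
    -- D is a decomposition function for the backward-time vector field G = -F
    (hD : IsDecompositionFunction wl wu (fun x w => -(F x w)) D)
    (T : ℝ) (hT : 0 ≤ T)
    -- (a, ah) is a solution of the embedding ODE (ȧ, ȧ̂) = E(a, â) on [0, T]
    (a ah : ℝ → (Fin n → ℝ))
    (ha : ∀ t ∈ Set.Icc (0:ℝ) T, HasDerivAt a (D (a t) wl (ah t) wu) t)
    (hah : ∀ t ∈ Set.Icc (0:ℝ) T, HasDerivAt ah (D (ah t) wu (a t) wl) t)
    (x0 : Fin n → ℝ)
    (w : ℝ → (Fin m → ℝ))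
    (hwmem : ∀ t ∈ Set.Icc (0:ℝ) T, w t ∈ Set.Icc wl wu)
    (hwpc : PiecewiseContinuousOn w (Set.Icc 0 T))
    (x : ℝ → (Fin n → ℝ))
    (hx : ∀ t ∈ Set.Icc (0:ℝ) T, HasDerivAt x (F (x t) (w t)) t)
    (hx0 : x 0 = x0)
    (hxT : a 0 ≤ x T ∧ x T ≤ ah 0) :
    a T ≤ x0 ∧ x0 ≤ ah T :=
  prop2_backward_reachable_overapproximation_general wl wu F D hD T hT a ah ha hah x0 w hwmem x hx
    hx0 hxT
end

section
/- (Special Case 2) Suppose F is mixed-monotone with respect to a decomposition function d, and suppose additionally that for each i, d_i(x, w, x̂, ŵ) is nondecreasing in x_i. Then the backward-time vector field G(x, w) := -F(x, w) is mixed-monotone with decomposition function D(x, w, x̂, ŵ) := -d(x̂, ŵ, x, w); that is, D satisfies all the decomposition-function conditions for G. -/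
open Set Function Filter Topology

/-!
Negating `d` and swapping `(x, w)` with `(x̂, ŵ)` exchanges the "nondecreasing" and
"nonincreasing" slots, so each condition on `D` is the negation of a condition on `d`. The one
exception is monotonicity of `Dᵢ` in `x̂ᵢ`: it becomes monotonicity of `dᵢ` in `xᵢ`, which the
decomposition conditions do not give and the extra hypothesis supplies.
-/

theorem LocallyLipschitz.comp_swap {α β γ : Type*} [PseudoEMetricSpace α] [PseudoEMetricSpace β]
    [PseudoEMetricSpace γ] {f : α × β → γ} (hf : LocallyLipschitz f) :
    LocallyLipschitz fun p : β × α => f p.swap :=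
  hf.comp (LipschitzWith.prod_snd.prodMk LipschitzWith.prod_fst).locallyLipschitz

theorem IsDecompositionFunction.monotone_state_of_monotone_diag {n m : ℕ} {wl wu : Fin m → ℝ}
    {F : (Fin n → ℝ) → (Fin m → ℝ) → (Fin n → ℝ)}
    {d : (Fin n → ℝ) → (Fin m → ℝ) → (Fin n → ℝ) → (Fin m → ℝ) → (Fin n → ℝ)}
    (hd : IsDecompositionFunction wl wu F d)
    (hdiag : ∀ (i : Fin n) (x xh : Fin n → ℝ) (s t : ℝ), s ≤ t →
      ∀ w ∈ Set.Icc wl wu, ∀ wh ∈ Set.Icc wl wu,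
        d (Function.update x i s) w xh wh i ≤ d (Function.update x i t) w xh wh i)
    (i j : Fin n) (x xh : Fin n → ℝ) {s t : ℝ} (hst : s ≤ t)
    {w wh : Fin m → ℝ} (hw : w ∈ Set.Icc wl wu) (hwh : wh ∈ Set.Icc wl wu) :
    d (Function.update x j s) w xh wh i ≤ d (Function.update x j t) w xh wh i := by
  rcases eq_or_ne j i with rfl | hji
  · exact hdiag j x xh s t hst w hw wh hwh
  · exact hd.2.2.1 i j hji x xh s t hst w hw wh hwh

theorem specialcase2_backward_decomposition_general
    {n m : ℕ} (wl wu : Fin m → ℝ)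
    (F : (Fin n → ℝ) → (Fin m → ℝ) → (Fin n → ℝ))
    (d : (Fin n → ℝ) → (Fin m → ℝ) → (Fin n → ℝ) → (Fin m → ℝ) → (Fin n → ℝ))
    (hd : IsDecompositionFunction wl wu F d)
    -- each dᵢ is nondecreasing in xᵢ
    (hdiag : ∀ (i : Fin n) (x xh : Fin n → ℝ) (s t : ℝ), s ≤ t →
      ∀ w ∈ Set.Icc wl wu, ∀ wh ∈ Set.Icc wl wu,
        d (Function.update x i s) w xh wh i ≤ d (Function.update x i t) w xh wh i) :
    IsDecompositionFunction wl wu (fun x w => -(F x w)) (fun x w xh wh => -(d xh wh x w)) := by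
  have hx_mono := hd.monotone_state_of_monotone_diag hdiag
  obtain ⟨hlip, hdiag_eq, -, hxh, hw, hwh⟩ := hd
  refine ⟨hlip.comp_swap.neg, fun x w hwm => congrArg Neg.neg (hdiag_eq x w hwm), ?_, ?_, ?_, ?_⟩
  · intro i j _ x xh s t hst w hwm wh hwhm
    exact neg_le_neg (hxh i j xh x s t hst wh hwhm w hwm)
  · intro i j x xh s t hst w hwm wh hwhm
    exact neg_le_neg (hx_mono i j xh x hst hwhm hwm)
  · intro i k x xh s t hs hst ht w hwm wh hwhm
    exact neg_le_neg (hwh i k xh x s t hs hst ht wh hwhm w hwm)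
  · intro i k x xh s t hs hst ht w hwm wh hwhm
    exact neg_le_neg (hw i k xh x s t hs hst ht wh hwhm w hwm)

/-- Special Case 2: if `F` is mixed-monotone with respect to `d` and,
additionally, each `dᵢ` is nondecreasing in `xᵢ`, then the backward-time vector field
`G(x, w) = -F(x, w)` is mixed-monotone with decomposition function
`D(x, w, x̂, ŵ) = -d(x̂, ŵ, x, w)`. -/
theorem specialcase2_backward_decomposition
    {n m : ℕ} (wl wu : Fin m → ℝ) (hwlu : wl ≤ wu)
    (F : (Fin n → ℝ) → (Fin m → ℝ) → (Fin n → ℝ))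
    (d : (Fin n → ℝ) → (Fin m → ℝ) → (Fin n → ℝ) → (Fin m → ℝ) → (Fin n → ℝ))
    (hd : IsDecompositionFunction wl wu F d)
    -- each dᵢ is nondecreasing in xᵢ
    (hdiag : ∀ (i : Fin n) (x xh : Fin n → ℝ) (s t : ℝ), s ≤ t →
      ∀ w ∈ Set.Icc wl wu, ∀ wh ∈ Set.Icc wl wu,
        d (Function.update x i s) w xh wh i ≤ d (Function.update x i t) w xh wh i) :
    IsDecompositionFunction wl wu (fun x w => -(F x w)) (fun x w xh wh => -(d xh wh x w)) :=
  specialcase2_backward_decomposition_general wl wu F d hd hdiag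
end

section
/- (Special Case 1) Let F : ℝⁿ × 𝒲 → ℝᶰ be continuously differentiable, with 𝒲 = [w̲, w̄] ⊆ ℝᵐ a hyperrectangle. Suppose for every pair i ≠ j there are a flag δ_{ij} ∈ {0, 1} and a constant α_{ij} ≥ 0 such that: if δ_{ij} = 0 then ∂F_i/∂x_j(x, w) ≥ -α_{ij} for all x ∈ ℝⁿ, w ∈ 𝒲, and if δ_{ij} = 1 then ∂F_i/∂x_j(x, w) ≤ α_{ij} for all x, w; and for every pair i, k there are a flag ε_{ik} ∈ {0, 1} and a constant β_{ik} ≥ 0 such that: if ε_{ik} = 0 then ∂F_i/∂w_k(x, w) ≥ -β_{ik} for all x, w, and if ε_{ik} = 1 then ∂F_i/∂w_k(x, w) ≤ β_{ik} for all x, w. For each i define ξⁱ ∈ ℝⁿ by ξⁱ_i = x_i, ξⁱ_j = x_j if δ_{ij} = 0 and ξⁱ_j = x̂_j if δ_{ij} = 1 (j ≠ i), and πⁱ ∈ ℝᵐ by πⁱ_k = w_k if ε_{ik} = 0 and πⁱ_k = ŵ_k if ε_{ik} = 1, and set d_i(x, w, x̂, ŵ) := F_i(ξⁱ, πⁱ)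 + Σ_{j ≠ i} α_{ij}(x_j - x̂_j) + Σ_k β_{ik}(w_k - ŵ_k). Then d is a decomposition function for F, i.e., the system ẋ = F(x, w) is mixed-monotone with respect to d. -/
/-!
If `δᵢⱼ = 0`, then along the coordinate `xⱼ` the map `u ↦ Fᵢ(ξⁱ[j ↦ u], πⁱ) + αᵢⱼ u` has
derivative `∂Fᵢ/∂xⱼ + αᵢⱼ ≥ 0`, so it is nondecreasing, and this is exactly how `dᵢ` depends on
`xⱼ`. If `δᵢⱼ = 1`, then `xⱼ` enters `dᵢ` only through `αᵢⱼ (xⱼ - x̂ⱼ)`, which is nondecreasing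
because `αᵢⱼ ≥ 0`. The same argument, with the signs reversed or with `β`, `ε`, gives the
monotonicity in `x̂`, `w` and `ŵ`; the segments in the `w`-directions stay inside the box `𝒲`.
On the diagonal `ξⁱ = x`, `πⁱ = w` and the linear terms vanish, and `d` is `C¹`, hence locally
Lipschitz.
-/

open Set Function Filter Topology

section PartialDerivative
variable {ι : Type*} [Fintype ι] [DecidableEq ι] {f : (ι → ℝ) → ℝ} {c s t : ℝ}

theorem update_add_mul_le_of_neg_le_fderiv (hf : Differentiable ℝ f) (x : ι → ℝ) (j : ι)
    (hst : s ≤ t) (hb : ∀ u ∈ Icc s t, -c ≤ fderiv ℝ f (update x j u) (Pi.single j 1)) :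
    f (update x j s) + c * s ≤ f (update x j t) + c * t := by
  have hderiv (u : ℝ) : HasDerivAt (fun u => f (update x j u) + c * u)
      (fderiv ℝ f (update x j u) (Pi.single j 1) + c) u :=
    ((hf _).hasFDerivAt.comp_hasDerivAt u (hasDerivAt_update x j u)).add
      (by simpa using (hasDerivAt_id u).const_mul c)
  refine monotoneOn_of_hasDerivWithinAt_nonneg (convex_Icc s t)
    (HasDerivAt.continuousOn fun u _ => hderiv u) (fun u _ => (hderiv u).hasDerivWithinAt)
    (fun u hu => ?_) (left_mem_Icc.2 hst) (right_mem_Icc.2 hst) hst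
  rw [interior_Icc] at hu
  linarith [hb u (Ioo_subset_Icc_self hu)]

theorem update_sub_mul_le_of_fderiv_le (hf : Differentiable ℝ f) (x : ι → ℝ) (j : ι)
    (hst : s ≤ t) (hb : ∀ u ∈ Icc s t, fderiv ℝ f (update x j u) (Pi.single j 1) ≤ c) :
    f (update x j t) - c * t ≤ f (update x j s) - c * s := by
  have := update_add_mul_le_of_neg_le_fderiv (f := fun y => -f y) (c := c) hf.fun_neg x j hst
    fun u hu => by simpa [fderiv_fun_neg] using hb u hu
  linarith

end PartialDerivative

section WeightedSum
variable {ι : Type*} [DecidableEq ι] {S : Finset ι} {j : ι}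

theorem Finset.sum_mul_update_sub (hj : j ∈ S) (c x y : ι → ℝ) (u : ℝ) :
    ∑ l ∈ S, c l * (update x j u l - y l) = ∑ l ∈ S, c l * (x l - y l) + c j * (u - x j) := by
  rw [← Finset.add_sum_erase _ _ hj, ← Finset.add_sum_erase _ _ hj, update_self,
    Finset.sum_congr rfl fun l hl => by rw [update_of_ne (Finset.ne_of_mem_erase hl)]]
  ring

theorem Finset.sum_mul_sub_update (hj : j ∈ S) (c x y : ι → ℝ) (u : ℝ) :
    ∑ l ∈ S, c l * (x l - update y j u l) = ∑ l ∈ S, c l * (x l - y l) - c j * (u - y j) := by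
  rw [← Finset.add_sum_erase _ _ hj, ← Finset.add_sum_erase _ _ hj, update_self,
    Finset.sum_congr rfl fun l hl => by rw [update_of_ne (Finset.ne_of_mem_erase hl)]]
  ring

theorem Finset.sum_mul_sub_update_of_notMem (hj : j ∉ S) (c x y : ι → ℝ) (u : ℝ) :
    ∑ l ∈ S, c l * (x l - update y j u l) = ∑ l ∈ S, c l * (x l - y l) :=
  Finset.sum_congr rfl fun l hl => by rw [update_of_ne (ne_of_mem_of_not_mem hl hj)]

end WeightedSum

section MixedState
variable {ι : Type*} [DecidableEq ι] {δ : ι → ι → Bool} {i j : ι} {u : ℝ}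

/-- The point `ξⁱ` of the paper. -/
def mixedState (δ : ι → ι → Bool) (i : ι) (x xh : ι → ℝ) : ι → ℝ :=
  fun j => if j = i then x i else if δ i j then xh j else x j

@[simp] theorem mixedState_self (x : ι → ℝ) : mixedState δ i x x = x := by
  ext l; by_cases h : l = i <;> simp [mixedState, h]

theorem mixedState_update_left_of_false (hji : j ≠ i) (hδ : δ i j = false) (x xh : ι → ℝ) :
    mixedState δ i (update x j u) xh = update (mixedState δ i x xh) j u := by
  ext l; rcases eq_or_ne l j with rfl | hl <;> by_cases hli : l = i <;> simp_all [mixedState]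

theorem mixedState_update_left_of_true (hji : j ≠ i) (hδ : δ i j = true) (x xh : ι → ℝ) :
    mixedState δ i (update x j u) xh = mixedState δ i x xh := by
  ext l; rcases eq_or_ne l j with rfl | hl <;> by_cases hli : l = i <;> simp_all [mixedState]

theorem mixedState_update_right_of_true (hji : j ≠ i) (hδ : δ i j = true) (x xh : ι → ℝ) :
    mixedState δ i x (update xh j u) = update (mixedState δ i x xh) j u := by
  ext l; rcases eq_or_ne l j with rfl | hl <;> by_cases hli : l = i <;> simp_all [mixedState]

theorem mixedState_update_right_of_false (hδ : j = i ∨ δ i j = false) (x xh : ι → ℝ) :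
    mixedState δ i x (update xh j u) = mixedState δ i x xh := by
  ext l; rcases eq_or_ne l j with rfl | hl <;> by_cases hli : l = i <;> simp_all [mixedState]

end MixedState

section MixedInput
variable {ι κ : Type*} {ε : ι → κ → Bool} {i : ι} {k : κ} {u : ℝ}

/-- The point `πⁱ` of the paper. -/
def mixedInput (ε : ι → κ → Bool) (i : ι) (w wh : κ → ℝ) : κ → ℝ :=
  fun k => if ε i k then wh k else w k

@[simp] theorem mixedInput_self (w : κ → ℝ) : mixedInput ε i w w = w := by
  ext l; simp [mixedInput]

theorem mixedInput_mem_Icc {wl wu w wh : κ → ℝ} (hw : w ∈ Icc wl wu) (hwh : wh ∈ Icc wl wu) :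
    mixedInput ε i w wh ∈ Icc wl wu :=
  ⟨fun l => by unfold mixedInput; split_ifs; exacts [hwh.1 l, hw.1 l],
   fun l => by unfold mixedInput; split_ifs; exacts [hwh.2 l, hw.2 l]⟩

variable [DecidableEq κ]

theorem update_mem_Icc {wl wu w : κ → ℝ} (hw : w ∈ Icc wl wu) (hu : u ∈ Icc (wl k) (wu k)) :
    update w k u ∈ Icc wl wu :=
  ⟨le_update_iff.2 ⟨hu.1, fun l _ => hw.1 l⟩, update_le_iff.2 ⟨hu.2, fun l _ => hw.2 l⟩⟩

theorem mixedInput_update_left_of_false (hε : ε i k = false) (w wh : κ → ℝ) :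
    mixedInput ε i (update w k u) wh = update (mixedInput ε i w wh) k u := by
  ext l; rcases eq_or_ne l k with rfl | hl <;> simp_all [mixedInput]

theorem mixedInput_update_left_of_true (hε : ε i k = true) (w wh : κ → ℝ) :
    mixedInput ε i (update w k u) wh = mixedInput ε i w wh := by
  ext l; rcases eq_or_ne l k with rfl | hl <;> simp_all [mixedInput]

theorem mixedInput_update_right_of_true (hε : ε i k = true) (w wh : κ → ℝ) :
    mixedInput ε i w (update wh k u) = update (mixedInput ε i w wh) k u := by
  ext l; rcases eq_or_ne l k with rfl | hl <;> simp_all [mixedInput]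

theorem mixedInput_update_right_of_false (hε : ε i k = false) (w wh : κ → ℝ) :
    mixedInput ε i w (update wh k u) = mixedInput ε i w wh := by
  ext l; rcases eq_or_ne l k with rfl | hl <;> simp_all [mixedInput]

end MixedInput

section Decomposition
variable {ι κ : Type*} [Fintype ι] [DecidableEq ι] [Fintype κ]
  (F : (ι → ℝ) → (κ → ℝ) → (ι → ℝ)) (δ : ι → ι → Bool) (α : ι → ι → ℝ)
  (ε : ι → κ → Bool) (β : ι → κ → ℝ)

def jacobianBoundDecomposition (x : ι → ℝ) (w : κ → ℝ) (xh : ι → ℝ) (wh : κ → ℝ) : ι → ℝ :=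
  fun i => F (mixedState δ i x xh) (mixedInput ε i w wh) i
    + ∑ j ∈ Finset.univ.filter (· ≠ i), α i j * (x j - xh j) + ∑ k, β i k * (w k - wh k)

variable {F δ α ε β}

theorem contDiff_jacobianBoundDecomposition {r : WithTop ℕ∞}
    (hF : ContDiff ℝ r fun p : (ι → ℝ) × (κ → ℝ) => F p.1 p.2) :
    ContDiff ℝ r fun p : ((ι → ℝ) × (κ → ℝ)) × ((ι → ℝ) × (κ → ℝ)) =>
      jacobianBoundDecomposition F δ α ε β p.1.1 p.1.2 p.2.1 p.2.2 := by
  refine contDiff_pi.2 fun i => ?_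
  have hξ : ContDiff ℝ r fun p : ((ι → ℝ) × (κ → ℝ)) × ((ι → ℝ) × (κ → ℝ)) =>
      mixedState δ i p.1.1 p.2.1 :=
    contDiff_pi.2 fun j => by unfold mixedState; split_ifs <;> fun_prop
  have hπ : ContDiff ℝ r fun p : ((ι → ℝ) × (κ → ℝ)) × ((ι → ℝ) × (κ → ℝ)) =>
      mixedInput ε i p.1.2 p.2.2 :=
    contDiff_pi.2 fun k => by unfold mixedInput; split_ifs <;> fun_prop
  exact ((contDiff_pi.1 (hF.comp (hξ.prodMk hπ)) i).add (by fun_prop)).add (by fun_prop)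

theorem jacobianBoundDecomposition_self (x : ι → ℝ) (w : κ → ℝ) :
    jacobianBoundDecomposition F δ α ε β x w x w = F x w := by
  ext i; simp [jacobianBoundDecomposition]

variable {wl wu w wh : κ → ℝ} {i j : ι} {s t : ℝ}

theorem jacobianBoundDecomposition_update_x_le (hF : ∀ v, Differentiable ℝ fun y => F y v i)
    (hα : 0 ≤ α i j) (hji : j ≠ i)
    (hJ : δ i j = false → ∀ x, ∀ v ∈ Icc wl wu,
      -(α i j) ≤ fderiv ℝ (fun y => F y v i) x (Pi.single j 1))
    (hw : w ∈ Icc wl wu) (hwh : wh ∈ Icc wl wu) (x xh : ι → ℝ) (hst : s ≤ t) :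
    jacobianBoundDecomposition F δ α ε β (update x j s) w xh wh i ≤
      jacobianBoundDecomposition F δ α ε β (update x j t) w xh wh i := by
  have hj : j ∈ Finset.univ.filter (· ≠ i) := by simpa
  simp only [jacobianBoundDecomposition, Finset.sum_mul_update_sub hj]
  cases hδ : δ i j
  · simp only [mixedState_update_left_of_false hji hδ]
    linear_combination update_add_mul_le_of_neg_le_fderiv (hF _) (mixedState δ i x xh) j hst
      fun u _ => hJ hδ _ _ (mixedInput_mem_Icc hw hwh)
  · simp only [mixedState_update_left_of_true hji hδ]
    linear_combination mul_le_mul_of_nonneg_left hst hα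

theorem jacobianBoundDecomposition_update_xh_le (hF : ∀ v, Differentiable ℝ fun y => F y v i)
    (hα : 0 ≤ α i j)
    (hJ : j ≠ i → δ i j = true → ∀ x, ∀ v ∈ Icc wl wu,
      fderiv ℝ (fun y => F y v i) x (Pi.single j 1) ≤ α i j)
    (hw : w ∈ Icc wl wu) (hwh : wh ∈ Icc wl wu) (x xh : ι → ℝ) (hst : s ≤ t) :
    jacobianBoundDecomposition F δ α ε β x w (update xh j t) wh i ≤
      jacobianBoundDecomposition F δ α ε β x w (update xh j s) wh i := by
  simp only [jacobianBoundDecomposition]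
  rcases eq_or_ne j i with rfl | hji
  · simp only [Finset.sum_mul_sub_update_of_notMem (by simp : j ∉ Finset.univ.filter (· ≠ j)),
      mixedState_update_right_of_false (Or.inl rfl), le_rfl]
  have hj : j ∈ Finset.univ.filter (· ≠ i) := by simpa
  simp only [Finset.sum_mul_sub_update hj]
  cases hδ : δ i j
  · simp only [mixedState_update_right_of_false (Or.inr hδ)]
    linear_combination mul_le_mul_of_nonneg_left hst hα
  · simp only [mixedState_update_right_of_true hji hδ]
    linear_combination update_sub_mul_le_of_fderiv_le (hF _) (mixedState δ i x xh) j hst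
      fun u _ => hJ hji hδ _ _ (mixedInput_mem_Icc hw hwh)

theorem jacobianBoundDecomposition_update_w_le [DecidableEq κ] {k : κ}
    (hF : ∀ y, Differentiable ℝ fun v => F y v i) (hβ : 0 ≤ β i k)
    (hJ : ε i k = false → ∀ y, ∀ v ∈ Icc wl wu,
      -(β i k) ≤ fderiv ℝ (fun v => F y v i) v (Pi.single k 1))
    (hw : w ∈ Icc wl wu) (hwh : wh ∈ Icc wl wu) (x xh : ι → ℝ)
    (hs : wl k ≤ s) (hst : s ≤ t) (ht : t ≤ wu k) :
    jacobianBoundDecomposition F δ α ε β x (update w k s) xh wh i ≤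
      jacobianBoundDecomposition F δ α ε β x (update w k t) xh wh i := by
  simp only [jacobianBoundDecomposition, Finset.sum_mul_update_sub (Finset.mem_univ k)]
  cases hε : ε i k
  · simp only [mixedInput_update_left_of_false hε]
    linear_combination update_add_mul_le_of_neg_le_fderiv (hF _) (mixedInput ε i w wh) k hst
      fun u hu => hJ hε _ _ (update_mem_Icc (mixedInput_mem_Icc hw hwh)
        ⟨hs.trans hu.1, hu.2.trans ht⟩)
  · simp only [mixedInput_update_left_of_true hε]
    linear_combination mul_le_mul_of_nonneg_left hst hβ

theorem jacobianBoundDecomposition_update_wh_le [DecidableEq κ] {k : κ}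
    (hF : ∀ y, Differentiable ℝ fun v => F y v i) (hβ : 0 ≤ β i k)
    (hJ : ε i k = true → ∀ y, ∀ v ∈ Icc wl wu,
      fderiv ℝ (fun v => F y v i) v (Pi.single k 1) ≤ β i k)
    (hw : w ∈ Icc wl wu) (hwh : wh ∈ Icc wl wu) (x xh : ι → ℝ)
    (hs : wl k ≤ s) (hst : s ≤ t) (ht : t ≤ wu k) :
    jacobianBoundDecomposition F δ α ε β x w xh (update wh k t) i ≤
      jacobianBoundDecomposition F δ α ε β x w xh (update wh k s) i := by
  simp only [jacobianBoundDecomposition, Finset.sum_mul_sub_update (Finset.mem_univ k)]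
  cases hε : ε i k
  · simp only [mixedInput_update_right_of_false hε]
    linear_combination mul_le_mul_of_nonneg_left hst hβ
  · simp only [mixedInput_update_right_of_true hε]
    linear_combination update_sub_mul_le_of_fderiv_le (hF _) (mixedInput ε i w wh) k hst
      fun u hu => hJ hε _ _ (update_mem_Icc (mixedInput_mem_Icc hw hwh)
        ⟨hs.trans hu.1, hu.2.trans ht⟩)

end Decomposition

theorem specialcase1_jacobian_bounds_general
    {n m : ℕ} (wl wu : Fin m → ℝ)
    (F : (Fin n → ℝ) → (Fin m → ℝ) → (Fin n → ℝ))
    (hF : ContDiff ℝ 1 (fun p : (Fin n → ℝ) × (Fin m → ℝ) => F p.1 p.2))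
    (δ : Fin n → Fin n → Bool) (α : Fin n → Fin n → ℝ) (hα : ∀ i j, 0 ≤ α i j)
    (ε : Fin n → Fin m → Bool) (β : Fin n → Fin m → ℝ) (hβ : ∀ i k, 0 ≤ β i k)
    -- flag false: ∂Fᵢ/∂xⱼ ≥ -α i j everywhere
    (hJx0 : ∀ i j : Fin n, i ≠ j → δ i j = false →
      ∀ x : Fin n → ℝ, ∀ w ∈ Set.Icc wl wu,
        -(α i j) ≤ fderiv ℝ (fun y => F y w i) x (Pi.single j (1:ℝ)))
    -- flag true: ∂Fᵢ/∂xⱼ ≤ α i j everywhere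
    (hJx1 : ∀ i j : Fin n, i ≠ j → δ i j = true →
      ∀ x : Fin n → ℝ, ∀ w ∈ Set.Icc wl wu,
        fderiv ℝ (fun y => F y w i) x (Pi.single j (1:ℝ)) ≤ α i j)
    -- flag false: ∂Fᵢ/∂w_k ≥ -β i k everywhere
    (hJw0 : ∀ (i : Fin n) (k : Fin m), ε i k = false →
      ∀ x : Fin n → ℝ, ∀ w ∈ Set.Icc wl wu,
        -(β i k) ≤ fderiv ℝ (fun v => F x v i) w (Pi.single k (1:ℝ)))
    -- flag true: ∂Fᵢ/∂w_k ≤ β i k everywhere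
    (hJw1 : ∀ (i : Fin n) (k : Fin m), ε i k = true →
      ∀ x : Fin n → ℝ, ∀ w ∈ Set.Icc wl wu,
        fderiv ℝ (fun v => F x v i) w (Pi.single k (1:ℝ)) ≤ β i k) :
    IsDecompositionFunction wl wu F
      (fun x w xh wh => fun i =>
        F (fun j => if j = i then x i else if δ i j then xh j else x j)
          (fun k => if ε i k then wh k else w k) i
        + ∑ j ∈ Finset.univ.filter (fun j => j ≠ i), α i j * (x j - xh j)
        + ∑ k : Fin m, β i k * (w k - wh k)) := by
  have hFd := hF.differentiable one_ne_zero
  have hFx (v : Fin m → ℝ) (i : Fin n) : Differentiable ℝ fun y => F y v i :=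
    differentiable_pi.1 (hFd.comp (differentiable_id.prodMk (differentiable_const v))) i
  have hFw (y : Fin n → ℝ) (i : Fin n) : Differentiable ℝ fun v => F y v i :=
    differentiable_pi.1 (hFd.comp ((differentiable_const y).prodMk differentiable_id)) i
  show IsDecompositionFunction wl wu F (jacobianBoundDecomposition F δ α ε β)
  exact ⟨(contDiff_jacobianBoundDecomposition hF).locallyLipschitz,
    fun x w _ => jacobianBoundDecomposition_self x w,
    fun i j hji x xh _ _ hst _ hw _ hwh => jacobianBoundDecomposition_update_x_le (hFx · i)
      (hα i j) hji (hJx0 i j hji.symm) hw hwh x xh hst,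
    fun i j x xh _ _ hst _ hw _ hwh => jacobianBoundDecomposition_update_xh_le (hFx · i)
      (hα i j) (fun hji => hJx1 i j hji.symm) hw hwh x xh hst,
    fun i k x xh _ _ hs hst ht _ hw _ hwh => jacobianBoundDecomposition_update_w_le (hFw · i)
      (hβ i k) (hJw0 i k) hw hwh x xh hs hst ht,
    fun i k x xh _ _ hs hst ht _ hw _ hwh => jacobianBoundDecomposition_update_wh_le (hFw · i)
      (hβ i k) (hJw1 i k) hw hwh x xh hs hst ht⟩

/-- Special Case 1: if `F` is continuously differentiable and each
off-diagonal entry of `∂F/∂x` and each entry of `∂F/∂w` is bounded below (flag `= false`)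
or above (flag `= true`) by constants `α`, `β`, then the construction
`dᵢ(x, w, x̂, ŵ) = Fᵢ(ξⁱ, πⁱ) + Σ_{j ≠ i} α i j (xⱼ - x̂ⱼ) + Σ_k β i k (w_k - ŵ_k)`
is a decomposition function for `F`, i.e. `ẋ = F(x, w)` is mixed-monotone w.r.t. `d`. -/
theorem specialcase1_jacobian_bounds
    {n m : ℕ} (wl wu : Fin m → ℝ) (hwlu : wl ≤ wu)
    (F : (Fin n → ℝ) → (Fin m → ℝ) → (Fin n → ℝ))
    (hF : ContDiff ℝ 1 (fun p : (Fin n → ℝ) × (Fin m → ℝ) => F p.1 p.2))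
    (δ : Fin n → Fin n → Bool) (α : Fin n → Fin n → ℝ) (hα : ∀ i j, 0 ≤ α i j)
    (ε : Fin n → Fin m → Bool) (β : Fin n → Fin m → ℝ) (hβ : ∀ i k, 0 ≤ β i k)
    -- flag false: ∂Fᵢ/∂xⱼ ≥ -α i j everywhere
    (hJx0 : ∀ i j : Fin n, i ≠ j → δ i j = false →
      ∀ x : Fin n → ℝ, ∀ w ∈ Set.Icc wl wu,
        -(α i j) ≤ fderiv ℝ (fun y => F y w i) x (Pi.single j (1:ℝ)))
    -- flag true: ∂Fᵢ/∂xⱼ ≤ α i j everywhere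
    (hJx1 : ∀ i j : Fin n, i ≠ j → δ i j = true →
      ∀ x : Fin n → ℝ, ∀ w ∈ Set.Icc wl wu,
        fderiv ℝ (fun y => F y w i) x (Pi.single j (1:ℝ)) ≤ α i j)
    -- flag false: ∂Fᵢ/∂w_k ≥ -β i k everywhere
    (hJw0 : ∀ (i : Fin n) (k : Fin m), ε i k = false →
      ∀ x : Fin n → ℝ, ∀ w ∈ Set.Icc wl wu,
        -(β i k) ≤ fderiv ℝ (fun v => F x v i) w (Pi.single k (1:ℝ)))
    -- flag true: ∂Fᵢ/∂w_k ≤ β i k everywhere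
    (hJw1 : ∀ (i : Fin n) (k : Fin m), ε i k = true →
      ∀ x : Fin n → ℝ, ∀ w ∈ Set.Icc wl wu,
        fderiv ℝ (fun v => F x v i) w (Pi.single k (1:ℝ)) ≤ β i k) :
    IsDecompositionFunction wl wu F
      (fun x w xh wh => fun i =>
        F (fun j => if j = i then x i else if δ i j then xh j else x j)
          (fun k => if ε i k then wh k else w k) i
        + ∑ j ∈ Finset.univ.filter (fun j => j ≠ i), α i j * (x j - xh j)
        + ∑ k : Fin m, β i k * (w k - wh k)) :=
  specialcase1_jacobian_bounds_general wl wu F hF δ α hα ε β hβ hJx0 hJx1 hJw0 hJw1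
end

section
/- (Example 1) Consider F : ℝ² → ℝ² given by F(x) = (x₂² + 2, x₁) (no disturbance). Define d : ℝ² × ℝ² → ℝ² by d₂(x, x̂) = x₁ and d₁(x, x̂) = x₂² + 2 if x₂ ≥ 0 and x₂ ≥ -x̂₂; d₁(x, x̂) = x̂₂² + 2 if x̂₂ ≤ 0 and x₂ < -x̂₂; d₁(x, x̂) = x₂·x̂₂ + 2 if x₂ < 0 and x̂₂ > 0. Then d is well-defined and locally Lipschitz on ℝ² × ℝ², and d is a decomposition function for F: d(x, x) = F(x) for all x; d₁(x, x̂) is nondecreasing in x₂ and d₂ is nondecreasing in x₁; and each dᵢ is nonincreasing in every component of x̂. -/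
/-!
On each of its three regions the first component of `dEx1` equals
`max(x₂, -x̂₂, 0)² + min(x₂, 0) · max(x̂₂, 0) + 2`, a single formula built from locally Lipschitz
operations. Its monotonicity is visible term by term: the square is nondecreasing in `x₂` and
nonincreasing in `x̂₂`, and so is the product of the nonpositive factor `min(x₂, 0)`, nondecreasing
in `x₂`, with the nonnegative factor `max(x̂₂, 0)`, nondecreasing in `x̂₂`.
-/

/-- The vector field of Example 1: `F(x) = (x₂² + 2, x₁)`. -/
noncomputable def FEx1 (x : ℝ × ℝ) : ℝ × ℝ := (x.2 ^ 2 + 2, x.1)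

/-- The piecewise decomposition function of Example 1. -/
noncomputable def dEx1 (x xh : ℝ × ℝ) : ℝ × ℝ :=
  (if 0 ≤ x.2 ∧ -xh.2 ≤ x.2 then x.2 ^ 2 + 2
    else if xh.2 ≤ 0 ∧ x.2 < -xh.2 then xh.2 ^ 2 + 2
    else x.2 * xh.2 + 2,
   x.1)

lemma LocallyLipschitz.ring_mul {α 𝔸 : Type*} [PseudoMetricSpace α] [NormedRing 𝔸]
    [NormedAlgebra ℝ 𝔸] {f g : α → 𝔸} (hf : LocallyLipschitz f) (hg : LocallyLipschitz g) :
    LocallyLipschitz fun x => f x * g x :=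
  (contDiff_mul : ContDiff ℝ 1 fun p : 𝔸 × 𝔸 => p.1 * p.2).locallyLipschitz.comp (hf.prodMk hg)

noncomputable def dEx1Fst (a b : ℝ) : ℝ := max (max a (-b)) 0 ^ 2 + min a 0 * max b 0 + 2

lemma dEx1_eq (x xh : ℝ × ℝ) : dEx1 x xh = (dEx1Fst x.2 xh.2, x.1) := by
  obtain ⟨-, a⟩ := x
  obtain ⟨-, b⟩ := xh
  simp only [dEx1, dEx1Fst, Prod.mk.injEq, and_true]
  split_ifs with h₁ h₂
  · rw [max_eq_left h₁.2, max_eq_left h₁.1, min_eq_right h₁.1]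
    ring
  · rw [max_eq_right h₂.2.le, max_eq_left (neg_nonneg.mpr h₂.1), max_eq_right h₂.1]
    ring
  · have ha : a < 0 := by grind
    have hb : 0 < b := by grind
    rw [max_eq_right (max_le ha.le (by linarith)), min_eq_left ha.le, max_eq_left hb.le]
    ring

lemma dEx1Fst_mono_left (b : ℝ) : Monotone fun a => dEx1Fst a b := by
  intro s t h
  dsimp only [dEx1Fst]
  gcongr

lemma dEx1Fst_anti_right (a : ℝ) : Antitone (dEx1Fst a) := by
  intro s t h
  dsimp only [dEx1Fst]
  gcongr ?_ + ?_ + _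
  · gcongr
  · exact mul_le_mul_of_nonpos_left (max_le_max_right 0 h) (min_le_right a 0)

lemma locallyLipschitz_dEx1Fst : LocallyLipschitz fun p : ℝ × ℝ => dEx1Fst p.1 p.2 := by
  have hfst : LocallyLipschitz fun p : ℝ × ℝ => p.1 := LipschitzWith.prod_fst.locallyLipschitz
  have hsnd : LocallyLipschitz fun p : ℝ × ℝ => p.2 := LipschitzWith.prod_snd.locallyLipschitz
  have hneg : LocallyLipschitz fun p : ℝ × ℝ => -p.2 := hsnd.neg
  have hmax : LocallyLipschitz fun p : ℝ × ℝ => max (max p.1 (-p.2)) 0 :=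
    (hfst.max hneg).max_const 0
  simpa only [dEx1Fst, sq] using
    ((hmax.ring_mul hmax).add ((hfst.min_const 0).ring_mul (hsnd.max_const 0))).add
      (LocallyLipschitz.const 2)

lemma dEx1Fst_self (a : ℝ) : dEx1Fst a a = a ^ 2 + 2 := by
  rcases le_total 0 a with ha | ha <;> simp [dEx1Fst, ha]

/-- Example 1: `dEx1` is well defined (it takes the three stated values on
the three stated regions), is locally Lipschitz, and is a decomposition function for
`F(x) = (x₂² + 2, x₁)`: it agrees with `F` on the diagonal, `d₁` is nondecreasing in `x₂`,
`d₂` is nondecreasing in `x₁`, and each `dᵢ` is nonincreasing in every component of `x̂`. -/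
theorem example1_decomposition :
    -- well-definedness: the case formulas hold on the three regions
    (∀ x xh : ℝ × ℝ,
      ((0 ≤ x.2 ∧ -xh.2 ≤ x.2) → dEx1 x xh = (x.2 ^ 2 + 2, x.1)) ∧
      ((xh.2 ≤ 0 ∧ x.2 < -xh.2) → dEx1 x xh = (xh.2 ^ 2 + 2, x.1)) ∧
      ((x.2 < 0 ∧ 0 < xh.2) → dEx1 x xh = (x.2 * xh.2 + 2, x.1))) ∧
    -- locally Lipschitz
    LocallyLipschitz (fun p : (ℝ × ℝ) × (ℝ × ℝ) => dEx1 p.1 p.2) ∧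
    -- agrees with F on the diagonal
    (∀ x : ℝ × ℝ, dEx1 x x = FEx1 x) ∧
    -- d₁ is nondecreasing in x₂
    (∀ (x1 : ℝ) (xh : ℝ × ℝ) (s t : ℝ), s ≤ t → (dEx1 (x1, s) xh).1 ≤ (dEx1 (x1, t) xh).1) ∧
    -- d₂ is nondecreasing in x₁
    (∀ (x2 : ℝ) (xh : ℝ × ℝ) (s t : ℝ), s ≤ t → (dEx1 (s, x2) xh).2 ≤ (dEx1 (t, x2) xh).2) ∧
    -- each dᵢ is nonincreasing in x̂₁
    (∀ (x : ℝ × ℝ) (b s t : ℝ), s ≤ t →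
      (dEx1 x (t, b)).1 ≤ (dEx1 x (s, b)).1 ∧ (dEx1 x (t, b)).2 ≤ (dEx1 x (s, b)).2) ∧
    -- each dᵢ is nonincreasing in x̂₂
    (∀ (x : ℝ × ℝ) (a s t : ℝ), s ≤ t →
      (dEx1 x (a, t)).1 ≤ (dEx1 x (a, s)).1 ∧ (dEx1 x (a, t)).2 ≤ (dEx1 x (a, s)).2) := by
  refine ⟨fun x xh => ⟨fun h => ?_, fun h => ?_, fun h => ?_⟩, ?_, fun x => ?_,
    fun _ xh _ _ h => ?_, fun _ _ _ _ h => h, fun _ _ _ _ _ => ?_, fun x _ _ _ h => ?_⟩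
  · simp only [dEx1, if_pos h]
  · simp only [dEx1, h.2.not_ge, and_false, if_false, if_pos h]
  · simp only [dEx1, h.1.not_ge, h.2.not_ge, false_and, if_false]
  · have hx2 : LocallyLipschitz fun p : (ℝ × ℝ) × (ℝ × ℝ) => (p.1.2, p.2.2) :=
      (LipschitzWith.prod_snd.comp LipschitzWith.prod_fst).locallyLipschitz.prodMk
        (LipschitzWith.prod_snd.comp LipschitzWith.prod_snd).locallyLipschitz
    have hx1 : LocallyLipschitz fun p : (ℝ × ℝ) × (ℝ × ℝ) => p.1.1 :=
      (LipschitzWith.prod_fst.comp LipschitzWith.prod_fst).locallyLipschitz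
    simpa only [dEx1_eq, Function.comp_def] using (locallyLipschitz_dEx1Fst.comp hx2).prodMk hx1
  · rw [dEx1_eq, dEx1Fst_self, FEx1]
  · simpa only [dEx1_eq] using dEx1Fst_mono_left xh.2 h
  · simp only [dEx1_eq, le_refl, and_self]
  · simpa only [dEx1_eq, le_refl, and_true] using dEx1Fst_anti_right x.2 h
end

section
/- Suppose F is mixed-monotone with respect to a decomposition function d. Then the deterministic embedding system is monotone with respect to the southeast order: if (x, x̂), (y, ŷ) : [0, T] → ℝⁿ × ℝⁿ are both solutions of the ODE (ẋ, ẋ̂) = e(x, x̂) := (d(x, w̲, x̂, w̄), d(x̂, w̄, x, w̲)) and (x(0), x̂(0)) ⪯_SE (y(0), ŷ(0)), then (x(t), x̂(t)) ⪯_SE (y(t), ŷ(t)) for all t ∈ [0, T]. -/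
open Set Function Filter Topology

/-!
In the coordinates `z = (x, -x̂)` the southeast order becomes the componentwise order, and the
monotonicity properties of `d` make the embedding system cooperative: each component of the
field is nondecreasing in the other components. For a cooperative, locally Lipschitz field `f`
and two solutions `u`, `v`, let `ψ = ∑ᵢ ((uᵢ - vᵢ)⁺)²` (squared so that it is differentiable).
Where `uᵢ ≥ vᵢ`, cooperativity gives `f(u)ᵢ ≤ f(u ⊔ v)ᵢ`, and `u ⊔ v - v = (u - v)⁺`, so a
Lipschitz constant on the compact set swept by the trajectories yields `ψ' ≤ C ψ`. Since
`ψ(0) = 0`, Grönwall's inequality forces `ψ = 0`.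
-/

open scoped PosPart NNReal

theorem hasDerivAt_posPart_sq (x : ℝ) : HasDerivAt (fun y : ℝ => y⁺ ^ 2) (2 * x⁺) x := by
  rcases lt_trichotomy x 0 with hx | rfl | hx
  · have h : (fun y : ℝ => y⁺ ^ 2) =ᶠ[𝓝 x] fun _ => 0 := by
      filter_upwards [eventually_lt_nhds hx] with y hy
      simp [posPart_eq_zero.2 hy.le]
    simpa [posPart_eq_zero.2 hx.le] using (hasDerivAt_const x (0 : ℝ)).congr_of_eventuallyEq h
  · have hleft : HasDerivWithinAt (fun y : ℝ => y⁺ ^ 2) 0 (Iic 0) 0 :=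
      (hasDerivWithinAt_const _ _ 0).congr (fun y (hy : y ≤ 0) => by simp [posPart_eq_zero.2 hy])
        (by simp)
    have hright : HasDerivWithinAt (fun y : ℝ => y⁺ ^ 2) 0 (Ici 0) 0 := by
      refine ((hasDerivAt_pow 2 (0 : ℝ)).hasDerivWithinAt.congr
        (fun y (hy : 0 ≤ y) => by simp [posPart_eq_self.2 hy]) (by simp)).congr_deriv (by simp)
    simpa [Iic_union_Ici] using hleft.union hright
  · have h : (fun y : ℝ => y⁺ ^ 2) =ᶠ[𝓝 x] fun y => y ^ 2 := by
      filter_upwards [eventually_gt_nhds hx] with y hy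
      simp [posPart_eq_self.2 hy.le]
    simpa [posPart_eq_self.2 hx.le] using (hasDerivAt_pow 2 x).congr_of_eventuallyEq h

theorem HasDerivAt.posPart_sq {g : ℝ → ℝ} {g' t : ℝ} (hg : HasDerivAt g g' t) :
    HasDerivAt (fun s => (g s)⁺ ^ 2) (2 * (g t)⁺ * g') t :=
  (hasDerivAt_posPart_sq (g t)).comp t hg

theorem sq_norm_le_sum_sq {ι : Type*} [Fintype ι] (x : ι → ℝ) : ‖x‖ ^ 2 ≤ ∑ i, x i ^ 2 := by
  have hsum : 0 ≤ ∑ i, x i ^ 2 := by positivity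
  have : ‖x‖ ≤ √(∑ i, x i ^ 2) := (pi_norm_le_iff_of_nonneg (Real.sqrt_nonneg _)).2 fun i =>
    Real.abs_le_sqrt (Finset.single_le_sum (fun j _ => sq_nonneg (x j)) (Finset.mem_univ i))
  calc ‖x‖ ^ 2 ≤ √(∑ i, x i ^ 2) ^ 2 := by gcongr
    _ = ∑ i, x i ^ 2 := Real.sq_sqrt hsum

def IsCooperative {ι : Type*} (f : (ι → ℝ) → ι → ℝ) : Prop :=
  ∀ ⦃p q : ι → ℝ⦄, p ≤ q → ∀ i, p i = q i → f p i ≤ f q i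

namespace IsCooperative

variable {ι : Type*} [Fintype ι] {f : (ι → ℝ) → ι → ℝ}

theorem apply_sub_apply_le_mul_norm_posPart (hf : IsCooperative f) {L : ℝ≥0} {s : Set (ι → ℝ)}
    (hL : LipschitzOnWith L f s) {p q : ι → ℝ} (hq : q ∈ s) (hpq : p ⊔ q ∈ s) {i : ι}
    (hi : q i ≤ p i) : f p i - f q i ≤ L * ‖(p - q)⁺‖ := by
  have hcoop : f p i ≤ f (p ⊔ q) i := hf le_sup_left i (by simp [hi])
  have hlip : f (p ⊔ q) i - f q i ≤ L * ‖(p - q)⁺‖ := calc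
    f (p ⊔ q) i - f q i ≤ dist (f (p ⊔ q)) (f q) :=
      ((le_abs_self _).trans_eq (Real.dist_eq _ _).symm).trans (dist_le_pi_dist _ _ i)
    _ ≤ L * dist (p ⊔ q) q := hL.dist_le_mul _ hpq _ hq
    _ = L * ‖(p - q)⁺‖ := by rw [dist_eq_norm, sup_eq_add_posPart_sub, add_sub_cancel_left]
  linarith

theorem sum_posPart_mul_sub_le (hf : IsCooperative f) {L : ℝ≥0} {s : Set (ι → ℝ)}
    (hL : LipschitzOnWith L f s) {p q : ι → ℝ} (hq : q ∈ s) (hpq : p ⊔ q ∈ s) :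
    ∑ i, 2 * (p i - q i)⁺ * (f p i - f q i) ≤ 2 * Fintype.card ι * L * ∑ i, (p i - q i)⁺ ^ 2 := by
  have hterm : ∀ i, (p i - q i)⁺ * (f p i - f q i) ≤ L * ‖(p - q)⁺‖ ^ 2 := by
    intro i
    rcases le_total (p i) (q i) with hle | hle
    · simp [posPart_eq_zero.2 (sub_nonpos.2 hle)]
      positivity
    have hgap := hf.apply_sub_apply_le_mul_norm_posPart hL hq hpq hle
    have hcoord : (p i - q i)⁺ ≤ ‖(p - q)⁺‖ := (le_abs_self _).trans (norm_le_pi_norm (p - q)⁺ i)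
    calc (p i - q i)⁺ * (f p i - f q i) ≤ (p i - q i)⁺ * (L * ‖(p - q)⁺‖) := by gcongr
      _ ≤ ‖(p - q)⁺‖ * (L * ‖(p - q)⁺‖) := by gcongr
      _ = L * ‖(p - q)⁺‖ ^ 2 := by ring
  calc ∑ i, 2 * (p i - q i)⁺ * (f p i - f q i) ≤ ∑ _i : ι, 2 * (L * ‖(p - q)⁺‖ ^ 2) :=
        Finset.sum_le_sum fun i _ => by
          rw [mul_assoc]
          exact mul_le_mul_of_nonneg_left (hterm i) zero_le_two
    _ = 2 * Fintype.card ι * L * ‖(p - q)⁺‖ ^ 2 := by simp; ring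
    _ ≤ 2 * Fintype.card ι * L * ∑ i, (p i - q i)⁺ ^ 2 := by
        gcongr
        exact sq_norm_le_sum_sq _

/-- Kamke's comparison theorem for cooperative systems. -/
theorem le_of_hasDerivAt (hf : IsCooperative f) (hlip : LocallyLipschitz f) {a b : ℝ}
    {u v : ℝ → ι → ℝ} (hu : ∀ t ∈ Icc a b, HasDerivAt u (f (u t)) t)
    (hv : ∀ t ∈ Icc a b, HasDerivAt v (f (v t)) t) (ha : u a ≤ v a) :
    ∀ t ∈ Icc a b, u t ≤ v t := by
  have hcu : ContinuousOn u (Icc a b) := fun t ht => (hu t ht).continuousAt.continuousWithinAt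
  have hcv : ContinuousOn v (Icc a b) := fun t ht => (hv t ht).continuousAt.continuousWithinAt
  have hcuv : ContinuousOn (u ⊔ v) (Icc a b) :=
    continuousOn_pi.2 fun i => (continuousOn_pi.1 hcu i).sup (continuousOn_pi.1 hcv i)
  obtain ⟨L, hL⟩ : ∃ L, LipschitzOnWith L f (v '' Icc a b ∪ (u ⊔ v) '' Icc a b) :=
    hlip.locallyLipschitzOn.exists_lipschitzOnWith_of_compact <|
      (isCompact_Icc.image_of_continuousOn hcv).union (isCompact_Icc.image_of_continuousOn hcuv)
  set ψ : ℝ → ℝ := fun t => ∑ i, (u t i - v t i)⁺ ^ 2 with hψ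
  have hψ_deriv : ∀ t ∈ Icc a b,
      HasDerivAt ψ (∑ i, 2 * (u t i - v t i)⁺ * (f (u t) i - f (v t) i)) t := fun t ht =>
    HasDerivAt.fun_sum fun i _ =>
      ((hasDerivAt_pi.1 (hu t ht) i).sub (hasDerivAt_pi.1 (hv t ht) i)).posPart_sq
  have hψ_le := le_gronwallBound_of_liminf_deriv_right_le (δ := 0) (ε := 0)
    (fun t ht => (hψ_deriv t ht).continuousAt.continuousWithinAt)
    (fun t ht _ hr => (hψ_deriv t (Ico_subset_Icc_self ht)).hasDerivWithinAt.liminf_right_slope_le hr)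
    (by simp [hψ, posPart_eq_zero.2 (sub_nonpos.2 (ha _))])
    (fun t ht => by
      simpa using hf.sum_posPart_mul_sub_le hL (Or.inl ⟨t, Ico_subset_Icc_self ht, rfl⟩)
        (Or.inr ⟨t, Ico_subset_Icc_self ht, rfl⟩))
  intro t ht i
  have hψt : ψ t ≤ 0 := by simpa [gronwallBound_ε0_δ0] using hψ_le t ht
  have : (u t i - v t i)⁺ ^ 2 ≤ 0 :=
    (Finset.single_le_sum (f := fun j => (u t j - v t j)⁺ ^ 2) (fun j _ => sq_nonneg _)
      (Finset.mem_univ i)).trans hψt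
  simpa [sub_nonpos] using this

end IsCooperative

theorem HasDerivAt.sumElim {ι κ : Type*} [Fintype ι] [Fintype κ] {x : ℝ → ι → ℝ}
    {y : ℝ → κ → ℝ} {x' : ι → ℝ} {y' : κ → ℝ} {t : ℝ} (hx : HasDerivAt x x' t)
    (hy : HasDerivAt y y' t) : HasDerivAt (fun s => Sum.elim (x s) (y s)) (Sum.elim x' y') t :=
  hasDerivAt_pi.2 fun
    | .inl i => hasDerivAt_pi.1 hx i
    | .inr k => hasDerivAt_pi.1 hy k

theorem apply_le_apply_of_monotone_update {ι α β : Type*} [Fintype ι] [DecidableEq ι]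
    [Preorder α] [Preorder β] {g : (ι → α) → β} {a b : ι → α} (hab : a ≤ b)
    (hg : ∀ j, a j ≠ b j → ∀ c, Monotone fun s => g (update c j s)) : g a ≤ g b := by
  have key : ∀ s : Finset ι, g a ≤ g (s.piecewise b a) := by
    intro s
    induction s using Finset.induction_on with
    | empty => simp
    | insert j s hj ih =>
      refine ih.trans ?_
      rw [Finset.piecewise_insert]
      conv_lhs => rw [← update_eq_self j (s.piecewise b a), Finset.piecewise_eq_of_notMem _ _ _ hj]
      by_cases h : a j = b j
      · rw [h]
      · exact hg j h _ (hab j)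
  simpa using key Finset.univ

namespace IsDecompositionFunction

variable {n m : ℕ} {wl wu : Fin m → ℝ} {F : (Fin n → ℝ) → (Fin m → ℝ) → (Fin n → ℝ)}
  {d : (Fin n → ℝ) → (Fin m → ℝ) → (Fin n → ℝ) → (Fin m → ℝ) → (Fin n → ℝ)}
  {w wh : Fin m → ℝ}

theorem apply_le_apply_of_le_of_eq (hd : IsDecompositionFunction wl wu F d) {x x' : Fin n → ℝ}
    (hx : x ≤ x') {i : Fin n} (hi : x i = x' i) (xh : Fin n → ℝ) (hw : w ∈ Icc wl wu)
    (hwh : wh ∈ Icc wl wu) : d x w xh wh i ≤ d x' w xh wh i :=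
  apply_le_apply_of_monotone_update (g := fun z => d z w xh wh i) hx fun j hj c _ _ hst =>
    hd.2.2.1 i j (by rintro rfl; exact hj hi) c xh _ _ hst w hw wh hwh

theorem apply_le_apply_of_hat_le (hd : IsDecompositionFunction wl wu F d) (x : Fin n → ℝ)
    {xh xh' : Fin n → ℝ} (hxh : xh ≤ xh') (i : Fin n) (hw : w ∈ Icc wl wu)
    (hwh : wh ∈ Icc wl wu) : d x w xh' wh i ≤ d x w xh wh i :=
  neg_le_neg_iff.1 <| apply_le_apply_of_monotone_update (g := fun z => -d x w z wh i) hxh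
    fun j _ c _ _ hst => neg_le_neg (hd.2.2.2.1 i j x c _ _ hst w hw wh hwh)

end IsDecompositionFunction

/-- The embedding system `e` written in the coordinates `z = (x, -x̂)`. -/
def seEmbeddingField {n m : ℕ} (wl wu : Fin m → ℝ)
    (d : (Fin n → ℝ) → (Fin m → ℝ) → (Fin n → ℝ) → (Fin m → ℝ) → (Fin n → ℝ))
    (z : Fin n ⊕ Fin n → ℝ) : Fin n ⊕ Fin n → ℝ :=
  Sum.elim (d (z ∘ Sum.inl) wl (-(z ∘ Sum.inr)) wu) (-d (-(z ∘ Sum.inr)) wu (z ∘ Sum.inl) wl)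

section seEmbeddingField

variable {n m : ℕ} {wl wu : Fin m → ℝ} {F : (Fin n → ℝ) → (Fin m → ℝ) → (Fin n → ℝ)}
  {d : (Fin n → ℝ) → (Fin m → ℝ) → (Fin n → ℝ) → (Fin m → ℝ) → (Fin n → ℝ)}

theorem seEmbeddingField_sumElim (x xh : Fin n → ℝ) :
    seEmbeddingField wl wu d (Sum.elim x (-xh)) = Sum.elim (d x wl xh wu) (-d xh wu x wl) := by
  simp [seEmbeddingField]

theorem hasDerivAt_seEmbeddingField {x xh : ℝ → Fin n → ℝ} {t : ℝ}
    (hx : HasDerivAt x (d (x t) wl (xh t) wu) t) (hxh : HasDerivAt xh (d (xh t) wu (x t) wl) t) :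
    HasDerivAt (fun s => Sum.elim (x s) (-xh s))
      (seEmbeddingField wl wu d (Sum.elim (x t) (-xh t))) t := by
  rw [seEmbeddingField_sumElim]
  exact hx.sumElim hxh.neg

theorem IsDecompositionFunction.isCooperative_seEmbeddingField
    (hd : IsDecompositionFunction wl wu F d) (hwlu : wl ≤ wu) :
    IsCooperative (seEmbeddingField wl wu d) := by
  have hwl : wl ∈ Icc wl wu := left_mem_Icc.2 hwlu
  have hwu : wu ∈ Icc wl wu := right_mem_Icc.2 hwlu
  intro p q hpq i hi
  have hl : p ∘ Sum.inl ≤ q ∘ Sum.inl := fun _ => hpq _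
  have hr : -(q ∘ Sum.inr) ≤ -(p ∘ Sum.inr) := fun _ => neg_le_neg (hpq _)
  cases i with
  | inl k =>
    exact (hd.apply_le_apply_of_le_of_eq hl hi _ hwl hwu).trans
      (hd.apply_le_apply_of_hat_le _ hr k hwl hwu)
  | inr k =>
    exact neg_le_neg ((hd.apply_le_apply_of_le_of_eq hr (neg_inj.2 hi.symm) _ hwu hwl).trans
      (hd.apply_le_apply_of_hat_le _ hl k hwu hwl))

theorem IsDecompositionFunction.locallyLipschitz_seEmbeddingField
    (hd : IsDecompositionFunction wl wu F d) : LocallyLipschitz (seEmbeddingField wl wu d) := by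
  have hsum : LocallyLipschitz fun p : (Fin n → ℝ) × (Fin n → ℝ) => Sum.elim p.1 (-p.2) :=
    ContDiff.locallyLipschitz (𝕂 := ℝ) <| contDiff_pi.2 fun
      | .inl _ => by simp only [Sum.elim_inl]; fun_prop
      | .inr _ => by simp only [Sum.elim_inr]; fun_prop
  have hargs₁ : LocallyLipschitz fun z : Fin n ⊕ Fin n → ℝ =>
      ((z ∘ Sum.inl, wl), (-(z ∘ Sum.inr), wu)) := ContDiff.locallyLipschitz (𝕂 := ℝ) (by fun_prop)
  have hargs₂ : LocallyLipschitz fun z : Fin n ⊕ Fin n → ℝ =>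
      ((-(z ∘ Sum.inr), wu), (z ∘ Sum.inl, wl)) := ContDiff.locallyLipschitz (𝕂 := ℝ) (by fun_prop)
  exact hsum.comp ((hd.1.comp hargs₁).prodMk (hd.1.comp hargs₂))

end seEmbeddingField

theorem deterministic_embedding_monotone_SE_general
    {n m : ℕ} (wl wu : Fin m → ℝ) (hwlu : wl ≤ wu)
    (F : (Fin n → ℝ) → (Fin m → ℝ) → (Fin n → ℝ))
    (d : (Fin n → ℝ) → (Fin m → ℝ) → (Fin n → ℝ) → (Fin m → ℝ) → (Fin n → ℝ))
    (hd : IsDecompositionFunction wl wu F d)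
    (T : ℝ)
    (x xh y yh : ℝ → (Fin n → ℝ))
    -- (x, xh) and (y, yh) are solutions of the deterministic embedding ODE on [0, T]
    (hx : ∀ t ∈ Set.Icc (0:ℝ) T, HasDerivAt x (d (x t) wl (xh t) wu) t)
    (hxh : ∀ t ∈ Set.Icc (0:ℝ) T, HasDerivAt xh (d (xh t) wu (x t) wl) t)
    (hy : ∀ t ∈ Set.Icc (0:ℝ) T, HasDerivAt y (d (y t) wl (yh t) wu) t)
    (hyh : ∀ t ∈ Set.Icc (0:ℝ) T, HasDerivAt yh (d (yh t) wu (y t) wl) t)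
    -- southeast-ordered initial conditions
    (h0 : x 0 ≤ y 0 ∧ yh 0 ≤ xh 0) :
    ∀ t ∈ Set.Icc (0:ℝ) T, x t ≤ y t ∧ yh t ≤ xh t := by
  have hle := (hd.isCooperative_seEmbeddingField hwlu).le_of_hasDerivAt
    hd.locallyLipschitz_seEmbeddingField
    (fun t ht => hasDerivAt_seEmbeddingField (hx t ht) (hxh t ht))
    (fun t ht => hasDerivAt_seEmbeddingField (hy t ht) (hyh t ht))
    (Sum.elim_le_elim_iff.2 ⟨h0.1, neg_le_neg h0.2⟩)
  intro t ht
  obtain ⟨hxy, hxyh⟩ := Sum.elim_le_elim_iff.1 (hle t ht)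
  exact ⟨hxy, neg_le_neg_iff.1 hxyh⟩

/-- the deterministic embedding system
`(ẋ, ẋ̂) = e(x, x̂) = (d(x, w̲, x̂, w̄), d(x̂, w̄, x, w̲))` is monotone with respect to the
southeast order: southeast-ordered initial conditions yield southeast-ordered solutions. -/
theorem deterministic_embedding_monotone_SE
    {n m : ℕ} (wl wu : Fin m → ℝ) (hwlu : wl ≤ wu)
    (F : (Fin n → ℝ) → (Fin m → ℝ) → (Fin n → ℝ))
    (d : (Fin n → ℝ) → (Fin m → ℝ) → (Fin n → ℝ) → (Fin m → ℝ) → (Fin n → ℝ))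
    (hd : IsDecompositionFunction wl wu F d)
    (T : ℝ) (hT : 0 ≤ T)
    (x xh y yh : ℝ → (Fin n → ℝ))
    -- (x, xh) and (y, yh) are solutions of the deterministic embedding ODE on [0, T]
    (hx : ∀ t ∈ Set.Icc (0:ℝ) T, HasDerivAt x (d (x t) wl (xh t) wu) t)
    (hxh : ∀ t ∈ Set.Icc (0:ℝ) T, HasDerivAt xh (d (xh t) wu (x t) wl) t)
    (hy : ∀ t ∈ Set.Icc (0:ℝ) T, HasDerivAt y (d (y t) wl (yh t) wu) t)
    (hyh : ∀ t ∈ Set.Icc (0:ℝ) T, HasDerivAt yh (d (yh t) wu (y t) wl) t)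
    -- southeast-ordered initial conditions
    (h0 : x 0 ≤ y 0 ∧ yh 0 ≤ xh 0) :
    ∀ t ∈ Set.Icc (0:ℝ) T, x t ≤ y t ∧ yh t ≤ xh t :=
  deterministic_embedding_monotone_SE_general wl wu hwlu F d hd T x xh y yh hx hxh hy hyh h0
end
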